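/- arXiv:2409.08417 — 7 statements merged into one kernel-verified Lean document; each statement's English description precedes it below -/
import Mathlib

section
/- For 0 < Re(s) < 1, the Mellin transform of cosine satisfies ∫₀^∞ cos(x) x^{s-1} dx = Γ(s) cos(πs/2), where the integral is interpreted as an improper (conditionally convergent) integral. -/
open Filter Real Set MeasureTheory Complex

namespace MellinCosAux

lemma contOn_cpow (c : ℂ) : ContinuousOn (fun t : ℝ => (t : ℂ) ^ c) (Ioi 0) := by
  apply continuousOn_of_forall_continuousAt
  intro x hx
  exact (continuousAt_cpow_const <| ofReal_mem_slitPlane.2 hx).comp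
    continuous_ofReal.continuousAt

lemma cpow_ne_zero' {r : ℝ} (hr : 0 < r) (c : ℂ) : (r : ℂ) ^ c ≠ 0 := by
  simp [Complex.cpow_eq_zero_iff, ofReal_ne_zero.mpr hr.ne']

/-- complex Gamma-type integrability with rate r -/
lemma aux_intC {c : ℂ} (hc : -1 < c.re) {r : ℝ} (hr : 0 < r) :
    IntegrableOn (fun t : ℝ => (t : ℂ) ^ c * Complex.exp (-(r * t))) (Ioi 0) := by
  have h0 : IntegrableOn (fun x : ℝ => ((Real.exp (-x) : ℝ) : ℂ) * (x : ℂ) ^ ((c + 1) - 1))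
      (Ioi 0) := Complex.GammaIntegral_convergent (by simp only [Complex.add_re, Complex.one_re]; linarith)
  have h1 : IntegrableOn
      (fun x : ℝ => ((Real.exp (-(r * x)) : ℝ) : ℂ) * ((r * x : ℝ) : ℂ) ^ ((c + 1) - 1))
      (Ioi 0) := by
    have := (integrableOn_Ioi_comp_mul_left_iff
      (fun x : ℝ => ((Real.exp (-x) : ℝ) : ℂ) * (x : ℂ) ^ ((c + 1) - 1)) 0 hr).mpr
      (by simpa using h0)
    simpa using this
  have h2 := h1.const_mul (((r : ℂ) ^ c)⁻¹)
  apply MeasureTheory.IntegrableOn.congr_fun h2 ?_ measurableSet_Ioi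
  intro t ht
  simp only [mem_Ioi] at ht
  dsimp only
  have hrc : ((r * t : ℝ) : ℂ) ^ ((c + 1) - 1) = (r : ℂ) ^ c * (t : ℂ) ^ c := by
    rw [add_sub_cancel_right, Complex.ofReal_mul, Complex.mul_cpow_ofReal_nonneg hr.le ht.le]
  rw [hrc]
  have : ((Real.exp (-(r * t)) : ℝ) : ℂ) = Complex.exp (-(r * t)) := by
    rw [Complex.ofReal_exp]; push_cast; ring_nf
  rw [this]
  field_simp [cpow_ne_zero' hr c]

/-- real Gamma-type integrability with rate r -/
lemma aux_intR {b : ℝ} (hb : -1 < b) {r : ℝ} (hr : 0 < r) :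
    IntegrableOn (fun t : ℝ => t ^ b * Real.exp (-(r * t))) (Ioi 0) := by
  have h0 : IntegrableOn (fun x : ℝ => Real.exp (-x) * x ^ ((b + 1) - 1)) (Ioi 0) :=
    Real.GammaIntegral_convergent (by linarith)
  have h1 : IntegrableOn (fun x : ℝ => Real.exp (-(r * x)) * (r * x) ^ ((b + 1) - 1))
      (Ioi 0) := by
    have := (integrableOn_Ioi_comp_mul_left_iff
      (fun x : ℝ => Real.exp (-x) * x ^ ((b + 1) - 1)) 0 hr).mpr (by simpa using h0)
    simpa using this
  have h2 := h1.const_mul ((r ^ b)⁻¹)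
  apply MeasureTheory.IntegrableOn.congr_fun h2 ?_ measurableSet_Ioi
  intro t ht
  simp only [mem_Ioi] at ht
  dsimp only
  rw [add_sub_cancel_right, Real.mul_rpow hr.le ht.le]
  have : (r:ℝ) ^ b ≠ 0 := (Real.rpow_pos_of_pos hr b).ne'
  field_simp

lemma one_div_cpow_eq {x : ℝ} (hx : 0 < x) (w : ℂ) :
    (1 / (x : ℂ)) ^ w = (x : ℂ) ^ (-w) := by
  rw [one_div, inv_cpow _ _ (by rw [arg_ofReal_of_nonneg hx.le]; exact Ne.symm Real.pi_ne_zero),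
    ← cpow_neg]

theorem mellin_one_div_one_add {a : ℂ} (h0a : 0 < a.re) (h1a : a.re < 1) :
    ∫ u in Ioi (0:ℝ), (u : ℂ) ^ (a - 1) / (1 + (u : ℂ)) =
      Complex.Gamma a * Complex.Gamma (1 - a) := by
  set F : ℝ → ℝ → ℂ :=
    fun x u => ((Real.exp (-x) : ℝ) : ℂ) * ((u : ℂ) ^ (a - 1) * Complex.exp (-(x * u))) with hF
  have hmeas : AEStronglyMeasurable (Function.uncurry F)
      ((volume.restrict (Ioi 0)).prod (volume.restrict (Ioi 0))) := by
    rw [Measure.prod_restrict]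
    refine (ContinuousOn.mul ?_ (ContinuousOn.mul ?_ ?_)).aestronglyMeasurable
      (measurableSet_Ioi.prod measurableSet_Ioi)
    · exact (continuous_ofReal.comp (Real.continuous_exp.comp continuous_fst.neg)).continuousOn
    · exact (contOn_cpow (a - 1)).comp continuous_snd.continuousOn (fun p hp => hp.2)
    · exact (Complex.continuous_exp.comp
        (((continuous_ofReal.comp continuous_fst).mul
          (continuous_ofReal.comp continuous_snd)).neg)).continuousOn
  have hinner : ∀ᵐ x ∂(volume.restrict (Ioi (0:ℝ))),
      Integrable (fun u => F x u) (volume.restrict (Ioi 0)) := by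
    rw [ae_restrict_iff' measurableSet_Ioi]
    filter_upwards with x hx
    exact ((aux_intC (by simp only [Complex.sub_re, Complex.one_re]; linarith) hx).const_mul _)
  have hnormint : Integrable (fun x => ∫ u in Ioi (0:ℝ), ‖F x u‖) (volume.restrict (Ioi 0)) := by
    have heq : ∀ x ∈ Ioi (0:ℝ), (∫ u in Ioi (0:ℝ), ‖F x u‖) =
        Real.Gamma a.re * (Real.exp (-x) * x ^ ((1 - a.re) - 1)) := by
      intro x hx
      rw [mem_Ioi] at hx
      have h1 : ∀ u ∈ Ioi (0:ℝ), ‖F x u‖ =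
          Real.exp (-x) * (u ^ (a.re - 1) * Real.exp (-(x * u))) := by
        intro u hu
        rw [mem_Ioi] at hu
        simp only [hF, norm_mul, Complex.norm_real, Real.norm_eq_abs, Complex.norm_exp,
          norm_cpow_eq_rpow_re_of_pos hu, Complex.sub_re, Complex.one_re, Complex.neg_re,
          Complex.mul_re, Complex.ofReal_re, Complex.ofReal_im, mul_zero, sub_zero]
        rw [_root_.abs_of_nonneg (Real.exp_pos _).le]
      rw [setIntegral_congr_fun measurableSet_Ioi h1, integral_const_mul,
        Real.integral_rpow_mul_exp_neg_mul_Ioi h0a hx]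
      rw [one_div, Real.inv_rpow hx.le, ← Real.rpow_neg hx.le]
      rw [show -a.re = (1 - a.re) - 1 by ring]
      ring
    have hint : Integrable (fun x => Real.Gamma a.re * (Real.exp (-x) * x ^ ((1 - a.re) - 1)))
        (volume.restrict (Ioi 0)) :=
      (Real.GammaIntegral_convergent (by linarith)).const_mul _
    exact hint.congr ((ae_restrict_iff' measurableSet_Ioi).mpr
      (by filter_upwards with x hx; exact (heq x hx).symm))
  have hFint : Integrable (Function.uncurry F)
      ((volume.restrict (Ioi 0)).prod (volume.restrict (Ioi 0))) :=
    (integrable_prod_iff hmeas).mpr ⟨hinner, hnormint⟩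
  calc ∫ u in Ioi (0:ℝ), (u : ℂ) ^ (a - 1) / (1 + (u : ℂ))
      = ∫ u in Ioi (0:ℝ), ∫ x in Ioi (0:ℝ), F x u := by
        refine (setIntegral_congr_fun measurableSet_Ioi (fun u hu => ?_)).symm
        rw [mem_Ioi] at hu
        have hstep : ∀ x : ℝ, F x u = (u:ℂ)^(a-1) * (((Real.exp (-x) :ℝ):ℂ) * Complex.exp (-(x * u))) := by
          intro x; simp only [hF]; ring
        simp_rw [hstep]
        rw [integral_const_mul]
        have h2 : ∀ x : ℝ, ((Real.exp (-x) :ℝ):ℂ) * Complex.exp (-((x:ℂ) * (u:ℂ))) =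
            (x:ℂ) ^ ((1:ℂ) - 1) * Complex.exp (-(((1 + u : ℝ):ℂ) * (x:ℂ))) := by
          intro x
          rw [Complex.ofReal_exp, ← Complex.exp_add]
          push_cast
          rw [show (1:ℂ) - 1 = 0 by ring, Complex.cpow_zero, one_mul]
          ring_nf
        simp_rw [h2]
        rw [Complex.integral_cpow_mul_exp_neg_mul_Ioi (by norm_num) (by linarith : (0:ℝ) < 1 + u),
          Complex.cpow_one, Complex.Gamma_one, mul_one]
        push_cast
        rw [mul_one_div]
    _ = ∫ x in Ioi (0:ℝ), ∫ u in Ioi (0:ℝ), F x u := (integral_integral_swap hFint).symm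
    _ = ∫ x in Ioi (0:ℝ), Complex.Gamma a * (((Real.exp (-x) :ℝ):ℂ) * (x:ℂ) ^ ((1 - a) - 1)) := by
        refine setIntegral_congr_fun measurableSet_Ioi (fun x hx => ?_)
        rw [mem_Ioi] at hx
        simp only [hF]
        rw [integral_const_mul, Complex.integral_cpow_mul_exp_neg_mul_Ioi h0a hx,
          one_div_cpow_eq hx, show -a = (1 - a) - 1 by ring]
        ring
    _ = Complex.Gamma a * Complex.Gamma (1 - a) := by
        rw [integral_const_mul, Complex.Gamma_eq_integral (s := 1 - a)
          (by simp only [Complex.sub_re, Complex.one_re]; linarith)]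
        unfold Complex.GammaIntegral
        rfl

theorem A_integral {s : ℂ} (h0 : 0 < s.re) (h1 : s.re < 1) :
    ∫ t in Ioi (0:ℝ), (t : ℂ) ^ (-s) * ((t : ℂ) / (1 + (t : ℂ) ^ 2)) =
      (1 / 2) * (Complex.Gamma (1 - s / 2) * Complex.Gamma (s / 2)) := by
  set b : ℂ := 1 - s / 2 with hb
  have hsub := integral_comp_rpow_Ioi_of_pos
    (g := fun u : ℝ => (u : ℂ) ^ (b - 1) / (1 + (u : ℂ))) (p := 2) two_pos
  have hlhs : ∫ x in Ioi (0:ℝ), (2 * x ^ ((2:ℝ) - 1)) • ((((x:ℝ) ^ (2:ℝ) :ℝ) : ℂ) ^ (b - 1) / (1 + (((x:ℝ) ^ (2:ℝ) :ℝ) : ℂ)))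
      = 2 * ∫ t in Ioi (0:ℝ), (t : ℂ) ^ (-s) * ((t : ℂ) / (1 + (t : ℂ) ^ 2)) := by
    rw [← integral_const_mul]
    refine setIntegral_congr_fun measurableSet_Ioi (fun t ht => ?_)
    rw [mem_Ioi] at ht
    have ht' : (t:ℂ) ≠ 0 := ofReal_ne_zero.mpr ht.ne'
    have h2 : (t:ℝ) ^ ((2:ℝ)) = t ^ (2:ℕ) := by
      rw [← Real.rpow_natCast t 2]; norm_num
    have h3 : (((t:ℝ) ^ (2:ℝ) : ℝ) : ℂ) ^ (b - 1) = (t : ℂ) ^ (-s) := by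
      rw [h2]
      have : ((t ^ (2:ℕ) : ℝ) : ℂ) = ((t * t : ℝ) : ℂ) := by push_cast; ring
      rw [this, Complex.ofReal_mul, Complex.mul_cpow_ofReal_nonneg ht.le ht.le,
        ← Complex.cpow_add _ _ ht']
      congr 1
      rw [hb]; ring
    rw [h3]
    have h4 : ((((t:ℝ) ^ (2:ℝ)) : ℝ) : ℂ) = (t:ℂ) ^ 2 := by rw [h2]; push_cast; ring
    rw [h4]
    have h5 : ((2:ℝ) * t ^ ((2:ℝ) - 1)) = 2 * t := by norm_num
    rw [h5, Complex.real_smul]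
    push_cast
    ring
  rw [hlhs] at hsub
  have hval := mellin_one_div_one_add (a := b)
    (by rw [hb]; simp [Complex.div_ofNat_re]; linarith)
    (by rw [hb]; simp [Complex.div_ofNat_re]; linarith)
  rw [hval] at hsub
  have h1b : 1 - b = s / 2 := by rw [hb]; ring
  rw [h1b] at hsub
  linear_combination (1/2 : ℂ) * hsub

lemma hc1 (t : ℝ) : (I - (t:ℂ)) ≠ 0 := by
  intro h
  have := congrArg Complex.im h
  simp at this

lemma hc2 (t : ℝ) : (-I - (t:ℂ)) ≠ 0 := by
  intro h
  have := congrArg Complex.im h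
  simp at this

lemma hden (t : ℝ) : (1 + (t:ℂ)^2) ≠ 0 := by
  have : ((1 + t^2 : ℝ) : ℂ) ≠ 0 := ofReal_ne_zero.mpr (by positivity)
  convert this using 1
  push_cast; ring

lemma hprod (t : ℝ) : (I - (t:ℂ)) * (-I - (t:ℂ)) = 1 + (t:ℂ)^2 := by
  linear_combination (-1 : ℂ) * Complex.I_sq

noncomputable def Af (s : ℂ) (t : ℝ) : ℂ := (t:ℂ)^(-s) * ((t:ℂ) / (1 + (t:ℂ)^2))

noncomputable def Bf (s : ℂ) (T : ℝ) (t : ℝ) : ℂ :=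
  (t:ℂ)^(-s) * ((Complex.exp ((I - t) * T) / (I - t) +
    Complex.exp ((-I - t) * T) / (-I - t)) / 2)

lemma normAf {s : ℂ} {t : ℝ} (ht : 0 < t) :
    ‖Af s t‖ = t ^ (-s.re) * (t / (1 + t^2)) := by
  rw [Af]
  have h : ((t:ℂ) / (1 + (t:ℂ)^2)) = ((t / (1 + t^2) : ℝ) : ℂ) := by push_cast; ring
  rw [h, norm_mul, Complex.norm_real, Real.norm_eq_abs,
    norm_cpow_eq_rpow_re_of_pos ht, Complex.neg_re,
    _root_.abs_of_nonneg (by positivity : (0:ℝ) ≤ t / (1 + t^2))]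

lemma Af_contOn (s : ℂ) : ContinuousOn (Af s) (Ioi 0) := by
  apply (contOn_cpow (-s)).mul
  exact (continuous_ofReal.div
    (continuous_const.add (continuous_pow 2 |>.comp continuous_ofReal)) hden).continuousOn

lemma Af_integrableOn {s : ℂ} (h0 : 0 < s.re) (h1 : s.re < 1) :
    IntegrableOn (Af s) (Ioi 0) := by
  rw [← Ioc_union_Ioi_eq_Ioi (zero_le_one : (0:ℝ) ≤ 1), integrableOn_union]
  constructor
  · refine Integrable.mono' (g := fun t : ℝ => t ^ (-s.re)) ?_ ?_ ?_
    · exact (intervalIntegrable_iff_integrableOn_Ioc_of_le zero_le_one).mp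
        (intervalIntegral.intervalIntegrable_rpow' (by linarith))
    · exact ((Af_contOn s).mono (Ioc_subset_Ioi_self)).aestronglyMeasurable measurableSet_Ioc
    · rw [ae_restrict_iff' measurableSet_Ioc]
      filter_upwards with t ht
      rw [normAf ht.1]
      have h2 : t / (1 + t^2) ≤ 1 := by
        rw [div_le_one (by positivity)]
        nlinarith [ht.2]
      calc t ^ (-s.re) * (t / (1 + t^2)) ≤ t ^ (-s.re) * 1 := by
            apply mul_le_mul_of_nonneg_left h2 (Real.rpow_nonneg ht.1.le _)
        _ = t ^ (-s.re) := mul_one _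
  · refine Integrable.mono' (g := fun t : ℝ => t ^ (-s.re - 1)) ?_ ?_ ?_
    · exact integrableOn_Ioi_rpow_of_lt (by linarith) zero_lt_one
    · exact ((Af_contOn s).mono (Ioi_subset_Ioi zero_le_one)).aestronglyMeasurable
        measurableSet_Ioi
    · rw [ae_restrict_iff' measurableSet_Ioi]
      filter_upwards with t ht
      rw [mem_Ioi] at ht
      have ht0 : (0:ℝ) < t := lt_trans zero_lt_one ht
      rw [normAf ht0]
      have h2 : t / (1 + t^2) ≤ t⁻¹ := by
        rw [div_le_iff₀ (by positivity)]
        rw [inv_mul_eq_div, le_div_iff₀ ht0]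
        nlinarith
      calc t ^ (-s.re) * (t / (1 + t^2)) ≤ t ^ (-s.re) * t⁻¹ :=
            mul_le_mul_of_nonneg_left h2 (Real.rpow_nonneg ht0.le _)
        _ = t ^ (-s.re - 1) := by
            rw [← Real.rpow_neg_one t, ← Real.rpow_add ht0]
            ring_nf

lemma Bf_contOn (s : ℂ) (T : ℝ) : ContinuousOn (Bf s T) (Ioi 0) := by
  apply (contOn_cpow (-s)).mul
  apply Continuous.continuousOn
  apply Continuous.div_const
  apply Continuous.add
  · exact (Complex.continuous_exp.comp
      ((continuous_const.sub continuous_ofReal).mul continuous_const)).div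
      (continuous_const.sub continuous_ofReal) hc1
  · exact (Complex.continuous_exp.comp
      ((continuous_const.sub continuous_ofReal).mul continuous_const)).div
      (continuous_const.sub continuous_ofReal) hc2

lemma normBf_le {s : ℂ} {T t : ℝ} (ht : 0 < t) :
    ‖Bf s T t‖ ≤ t ^ (-s.re) * Real.exp (-(T * t)) := by
  rw [Bf, norm_mul, norm_cpow_eq_rpow_re_of_pos ht, Complex.neg_re]
  apply mul_le_mul_of_nonneg_left ?_ (Real.rpow_nonneg ht.le _)
  have key : ∀ c : ℂ, c ≠ 0 → 1 ≤ ‖c‖ → c.re = -t →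
      ‖Complex.exp (c * T) / c‖ ≤ Real.exp (-(T * t)) := by
    intro c hc h1c hre
    rw [norm_div, Complex.norm_exp]
    have : (c * T).re = -(T * t) := by
      rw [Complex.mul_re]
      simp [hre, mul_comm]
    rw [this]
    exact div_le_self (Real.exp_pos _).le h1c
  have k1 := key (I - t) (hc1 t)
    (by calc (1:ℝ) = |(I - (t:ℂ)).im| := by simp
          _ ≤ ‖I - t‖ := Complex.abs_im_le_norm _)
    (by simp)
  have k2 := key (-I - t) (hc2 t)
    (by calc (1:ℝ) = |(-I - (t:ℂ)).im| := by simp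
          _ ≤ ‖-I - t‖ := Complex.abs_im_le_norm _)
    (by simp)
  calc ‖(Complex.exp ((I - t) * T) / (I - t) +
          Complex.exp ((-I - t) * T) / (-I - t)) / 2‖
        = ‖Complex.exp ((I - t) * T) / (I - t) +
          Complex.exp ((-I - t) * T) / (-I - t)‖ / 2 := by
          rw [norm_div]; norm_num
      _ ≤ (‖Complex.exp ((I - t) * T) / (I - t)‖ +
          ‖Complex.exp ((-I - t) * T) / (-I - t)‖) / 2 := by
          gcongr
          exact norm_add_le _ _
      _ ≤ (Real.exp (-(T * t)) + Real.exp (-(T * t))) / 2 := by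
          gcongr
      _ = Real.exp (-(T * t)) := by ring

lemma Bf_integrableOn {s : ℂ} (h1 : s.re < 1) {T : ℝ} (hT : 0 < T) :
    IntegrableOn (Bf s T) (Ioi 0) := by
  refine Integrable.mono' (aux_intR (by linarith : (-1:ℝ) < -s.re) hT)
    ((Bf_contOn s T).aestronglyMeasurable measurableSet_Ioi) ?_
  rw [ae_restrict_iff' measurableSet_Ioi]
  filter_upwards with t
  exact fun ht' => normBf_le ht'

lemma norm_integral_Bf_le {s : ℂ} (h1 : s.re < 1) {T : ℝ} (hT : 0 < T) :
    ‖∫ t in Ioi (0:ℝ), Bf s T t‖ ≤ (1 / T) ^ (1 - s.re) * Real.Gamma (1 - s.re) := by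
  have hb := aux_intR (by linarith : (-1:ℝ) < -s.re) hT
  have h := norm_integral_le_of_norm_le (f := Bf s T) hb ?_
  · refine h.trans (le_of_eq ?_)
    have : ∀ t ∈ Ioi (0:ℝ), t ^ (-s.re) * Real.exp (-(T * t)) =
        t ^ ((1 - s.re) - 1) * Real.exp (-(T * t)) := by
      intro t ht
      norm_num
    rw [setIntegral_congr_fun measurableSet_Ioi this,
      Real.integral_rpow_mul_exp_neg_mul_Ioi (by linarith) hT]
  · rw [ae_restrict_iff' measurableSet_Ioi]
    filter_upwards with t
    exact fun ht' => normBf_le ht'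

lemma tendsto_integral_Bf {s : ℂ} (h1 : s.re < 1) :
    Tendsto (fun T : ℝ => ∫ t in Ioi (0:ℝ), Bf s T t) atTop (nhds 0) := by
  apply squeeze_zero_norm' (a := fun T => (1 / T) ^ (1 - s.re) * Real.Gamma (1 - s.re))
  · filter_upwards [eventually_gt_atTop (0:ℝ)] with T hT
    exact norm_integral_Bf_le h1 hT
  · have h2 : Tendsto (fun T : ℝ => T ^ (-(1 - s.re)) * Real.Gamma (1 - s.re)) atTop
        (nhds (0 * Real.Gamma (1 - s.re))) :=
      (tendsto_rpow_neg_atTop (by linarith)).mul_const _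
    rw [zero_mul] at h2
    apply h2.congr'
    filter_upwards [eventually_gt_atTop (0:ℝ)] with T hT
    rw [one_div, Real.inv_rpow hT.le, ← Real.rpow_neg hT.le]

lemma inner_cos {t T : ℝ} (hT : 0 ≤ T) :
    ∫ x in Ioc (0:ℝ) T, ((Real.cos x : ℝ) : ℂ) * Complex.exp (-((x:ℂ) * (t:ℂ))) =
      ((Complex.exp ((I - t) * T) - 1) / (I - t) +
       (Complex.exp ((-I - t) * T) - 1) / (-I - t)) / 2 := by
  rw [← intervalIntegral.integral_of_le hT]
  have hpt : ∀ x : ℝ, ((Real.cos x : ℝ) : ℂ) * Complex.exp (-((x:ℂ) * (t:ℂ))) =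
      (Complex.exp ((I - t) * x) + Complex.exp ((-I - t) * x)) / 2 := by
    intro x
    rw [Complex.ofReal_cos, Complex.cos]
    rw [div_mul_eq_mul_div, add_mul, ← Complex.exp_add, ← Complex.exp_add]
    congr 3 <;> ring
  rw [intervalIntegral.integral_congr (fun x _ => hpt x)]
  have hint1 : IntervalIntegrable (fun x : ℝ => Complex.exp ((I - t) * x)) volume 0 T :=
    (Complex.continuous_exp.comp (continuous_const.mul continuous_ofReal)).intervalIntegrable _ _
  have hint2 : IntervalIntegrable (fun x : ℝ => Complex.exp ((-I - t) * x)) volume 0 T :=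
    (Complex.continuous_exp.comp (continuous_const.mul continuous_ofReal)).intervalIntegrable _ _
  rw [intervalIntegral.integral_div, intervalIntegral.integral_add hint1 hint2,
    integral_exp_mul_complex (hc1 t), integral_exp_mul_complex (hc2 t)]
  norm_num

lemma split_eq (s : ℂ) (T : ℝ) (t : ℝ) :
    (t:ℂ)^(-s) * (((Complex.exp ((I - t) * T) - 1) / (I - t) +
       (Complex.exp ((-I - t) * T) - 1) / (-I - t)) / 2) = Af s t + Bf s T t := by
  rw [Af, Bf, ← mul_add]
  congr 1
  have h1 := hc1 t
  have h2 := hc2 t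
  have hd := hden t
  field_simp
  linear_combination (2*(t:ℂ)) * Complex.I_sq

lemma Gamma_one_sub_ne_zero {s : ℂ} (h1 : s.re < 1) : Complex.Gamma (1 - s) ≠ 0 := by
  apply Complex.Gamma_ne_zero
  intro m h
  have := congrArg Complex.re h
  simp only [Complex.sub_re, Complex.one_re, Complex.neg_re, Complex.natCast_re] at this
  have hm : (0:ℝ) ≤ m := Nat.cast_nonneg m
  linarith

lemma cpow_repr {s : ℂ} (h1 : s.re < 1) {x : ℝ} (hx : 0 < x) :
    (x:ℂ) ^ (s - 1) = (Complex.Gamma (1 - s))⁻¹ *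
      ∫ t in Ioi (0:ℝ), (t:ℂ) ^ (-s) * Complex.exp (-((x:ℂ) * (t:ℂ))) := by
  have h := Complex.integral_cpow_mul_exp_neg_mul_Ioi (a := 1 - s)
    (by simp only [Complex.sub_re, Complex.one_re]; linarith) hx
  have he : ∀ t : ℝ, (t:ℂ) ^ ((1 - s) - 1) = (t:ℂ) ^ (-s) := by
    intro t; congr 1; ring
  simp_rw [he] at h
  rw [h, one_div_cpow_eq hx, show -(1 - s) = s - 1 by ring]
  field_simp [Gamma_one_sub_ne_zero h1]

theorem fubini_cos {s : ℂ} (h0 : 0 < s.re) (h1 : s.re < 1) {T : ℝ} (hT : 0 < T) :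
    ∫ x in Ioc (0:ℝ) T, ((Real.cos x : ℝ) : ℂ) * (x:ℂ) ^ (s - 1) =
      (Complex.Gamma (1 - s))⁻¹ * ∫ t in Ioi (0:ℝ), (t:ℂ) ^ (-s) *
        ∫ x in Ioc (0:ℝ) T, ((Real.cos x : ℝ) : ℂ) * Complex.exp (-((x:ℂ) * (t:ℂ))) := by
  set F : ℝ → ℝ → ℂ :=
    fun x t => ((Real.cos x : ℝ) : ℂ) * ((t : ℂ) ^ (-s) * Complex.exp (-((x:ℂ) * (t:ℂ)))) with hF
  have hmeas : AEStronglyMeasurable (Function.uncurry F)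
      ((volume.restrict (Ioc 0 T)).prod (volume.restrict (Ioi 0))) := by
    rw [Measure.prod_restrict]
    refine (ContinuousOn.mul ?_ (ContinuousOn.mul ?_ ?_)).aestronglyMeasurable
      (measurableSet_Ioc.prod measurableSet_Ioi)
    · exact (continuous_ofReal.comp (Real.continuous_cos.comp continuous_fst)).continuousOn
    · exact (contOn_cpow (-s)).comp continuous_snd.continuousOn (fun p hp => hp.2)
    · exact (Complex.continuous_exp.comp
        (((continuous_ofReal.comp continuous_fst).mul
          (continuous_ofReal.comp continuous_snd)).neg)).continuousOn
  have hinner : ∀ᵐ x ∂(volume.restrict (Ioc (0:ℝ) T)),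
      Integrable (fun t => F x t) (volume.restrict (Ioi 0)) := by
    rw [ae_restrict_iff' measurableSet_Ioc]
    filter_upwards with x hx
    exact (aux_intC (by simp only [Complex.neg_re]; linarith) hx.1).const_mul _
  have hnormint : Integrable (fun x => ∫ t in Ioi (0:ℝ), ‖F x t‖)
      (volume.restrict (Ioc 0 T)) := by
    have hint : Integrable (fun x : ℝ => Real.Gamma (1 - s.re) * x ^ (s.re - 1))
        (volume.restrict (Ioc 0 T)) :=
      (((intervalIntegrable_iff_integrableOn_Ioc_of_le hT.le).mp
        (intervalIntegral.intervalIntegrable_rpow' (by linarith))).const_mul _)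
    refine Integrable.mono' hint ?_ ?_
    · exact (hmeas.norm.integral_prod_right')
    · rw [ae_restrict_iff' measurableSet_Ioc]
      filter_upwards with x
      intro hxm
      rw [Real.norm_eq_abs, _root_.abs_of_nonneg (integral_nonneg (fun t => norm_nonneg _))]
      have hx0 : 0 < x := hxm.1
      have h1n : ∀ t ∈ Ioi (0:ℝ), ‖F x t‖ =
          |Real.cos x| * (t ^ (-s.re) * Real.exp (-(x * t))) := by
        intro t ht
        rw [mem_Ioi] at ht
        simp only [hF, norm_mul, Complex.norm_real, Real.norm_eq_abs, Complex.norm_exp,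
          norm_cpow_eq_rpow_re_of_pos ht, Complex.neg_re, Complex.mul_re, Complex.ofReal_re,
          Complex.ofReal_im, mul_zero, sub_zero]
      rw [setIntegral_congr_fun measurableSet_Ioi h1n, integral_const_mul]
      have hval : ∀ t ∈ Ioi (0:ℝ), t ^ (-s.re) * Real.exp (-(x * t)) =
          t ^ ((1 - s.re) - 1) * Real.exp (-(x * t)) := by
        intro t ht; norm_num
      rw [setIntegral_congr_fun measurableSet_Ioi hval,
        Real.integral_rpow_mul_exp_neg_mul_Ioi (by linarith) hx0]
      calc |Real.cos x| * ((1 / x) ^ (1 - s.re) * Real.Gamma (1 - s.re))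
          ≤ 1 * ((1 / x) ^ (1 - s.re) * Real.Gamma (1 - s.re)) := by
            apply mul_le_mul_of_nonneg_right (Real.abs_cos_le_one x)
            exact mul_nonneg (Real.rpow_nonneg (by positivity) _)
              (Real.Gamma_pos_of_pos (by linarith)).le
        _ = Real.Gamma (1 - s.re) * x ^ (s.re - 1) := by
            rw [one_mul, one_div, Real.inv_rpow hx0.le, ← Real.rpow_neg hx0.le,
              show -(1 - s.re) = s.re - 1 by ring]
            ring
  have hFint : Integrable (Function.uncurry F)
      ((volume.restrict (Ioc 0 T)).prod (volume.restrict (Ioi 0))) :=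
    (integrable_prod_iff hmeas).mpr ⟨hinner, hnormint⟩
  calc ∫ x in Ioc (0:ℝ) T, ((Real.cos x : ℝ) : ℂ) * (x:ℂ) ^ (s - 1)
      = ∫ x in Ioc (0:ℝ) T, (Complex.Gamma (1 - s))⁻¹ * ∫ t in Ioi (0:ℝ), F x t := by
        refine setIntegral_congr_fun measurableSet_Ioc (fun x hx => ?_)
        rw [cpow_repr h1 hx.1, mul_left_comm]
        congr 1
        rw [← integral_const_mul]
    _ = (Complex.Gamma (1 - s))⁻¹ * ∫ x in Ioc (0:ℝ) T, ∫ t in Ioi (0:ℝ), F x t :=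
        integral_const_mul _ _
    _ = (Complex.Gamma (1 - s))⁻¹ * ∫ t in Ioi (0:ℝ), ∫ x in Ioc (0:ℝ) T, F x t := by
        rw [integral_integral_swap hFint]
    _ = (Complex.Gamma (1 - s))⁻¹ * ∫ t in Ioi (0:ℝ), (t:ℂ) ^ (-s) *
        ∫ x in Ioc (0:ℝ) T, ((Real.cos x : ℝ) : ℂ) * Complex.exp (-((x:ℂ) * (t:ℂ))) := by
        congr 1
        refine setIntegral_congr_fun measurableSet_Ioi (fun t ht => ?_)
        rw [← integral_const_mul]
        refine setIntegral_congr_fun measurableSet_Ioc (fun x hx => ?_)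
        simp only [hF]
        ring

lemma sin_pi_s_ne_zero {s : ℂ} (h0 : 0 < s.re) (h1 : s.re < 1) :
    Complex.sin ((Real.pi : ℂ) * s) ≠ 0 := by
  rw [Complex.sin_ne_zero_iff]
  intro k h
  have hπ : ((Real.pi : ℝ) : ℂ) ≠ 0 := ofReal_ne_zero.mpr Real.pi_ne_zero
  have hs : s = (k : ℂ) :=
    mul_left_cancel₀ hπ (by rw [h]; ring)
  have h2 := congrArg Complex.re hs
  simp only [Complex.intCast_re] at h2
  rw [h2] at h0 h1
  have : (0:ℤ) < k := by exact_mod_cast h0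
  have : (k:ℤ) < 1 := by exact_mod_cast h1
  omega

lemma final_algebra {s : ℂ} (h0 : 0 < s.re) (h1 : s.re < 1) :
    (Complex.Gamma (1 - s))⁻¹ *
      ((1 / 2) * (Complex.Gamma (1 - s / 2) * Complex.Gamma (s / 2))) =
      Complex.Gamma s * Complex.cos ((Real.pi : ℂ) * s / 2) := by
  have hrefl := Complex.Gamma_mul_Gamma_one_sub s
  have hrefl2 := Complex.Gamma_mul_Gamma_one_sub (s / 2)
  have hsinns := sin_pi_s_ne_zero h0 h1
  have hs2 : Complex.sin ((Real.pi : ℂ) * s) =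
      2 * Complex.sin ((Real.pi : ℂ) * s / 2) * Complex.cos ((Real.pi : ℂ) * s / 2) := by
    rw [show (Real.pi : ℂ) * s = 2 * ((Real.pi : ℂ) * s / 2) by ring, Complex.sin_two_mul]
    ring_nf
  have hsin2 : Complex.sin ((Real.pi : ℂ) * s / 2) ≠ 0 := by
    intro h; rw [hs2, h] at hsinns; simp at hsinns
  have hcos2 : Complex.cos ((Real.pi : ℂ) * s / 2) ≠ 0 := by
    intro h; rw [hs2, h] at hsinns; simp at hsinns
  have hG1s : Complex.Gamma (1 - s) ≠ 0 := by
    apply Complex.Gamma_ne_zero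
    intro m h
    have := congrArg Complex.re h
    simp only [Complex.sub_re, Complex.one_re, Complex.neg_re, Complex.natCast_re] at this
    have hm : (0:ℝ) ≤ m := Nat.cast_nonneg m
    linarith
  have key : Complex.Gamma s * Complex.Gamma (1 - s) * Complex.sin ((Real.pi : ℂ) * s) =
      (Real.pi : ℂ) := by
    rw [hrefl, div_mul_cancel₀ _ hsinns]
  have key2 : Complex.Gamma (s / 2) * Complex.Gamma (1 - s / 2) =
      (Real.pi : ℂ) / Complex.sin ((Real.pi : ℂ) * s / 2) := by
    rw [hrefl2, mul_div_assoc]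
  rw [hs2] at key
  rw [show Complex.Gamma (1 - s / 2) * Complex.Gamma (s / 2) =
    Complex.Gamma (s / 2) * Complex.Gamma (1 - s / 2) from mul_comm _ _, key2]
  field_simp [hG1s, hsin2]
  rw [show s * (Real.pi : ℂ) / 2 = (Real.pi : ℂ) * s / 2 by ring, div_eq_iff hsin2]
  linear_combination -key

end MellinCosAux

open MellinCosAux

/-- For `0 < Re(s) < 1`, the Mellin transform of cosine satisfies
`∫₀^∞ cos(x) x^{s-1} dx = Γ(s) cos(πs/2)`, the integral being interpreted as the
limit of `∫₀^T` as `T → ∞`. -/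
theorem mellin_cos (s : ℂ) (h0 : 0 < s.re) (h1 : s.re < 1) :
    Tendsto (fun T : ℝ => ∫ x in (0 : ℝ)..T, (Real.cos x : ℂ) * (x : ℂ) ^ (s - 1))
      atTop (nhds (Complex.Gamma s * Complex.cos ((Real.pi : ℂ) * s / 2))) := by
  have hA := Af_integrableOn h0 h1
  have hAval : ∫ t in Ioi (0:ℝ), Af s t =
      (1 / 2) * (Complex.Gamma (1 - s / 2) * Complex.Gamma (s / 2)) := by
    simp only [Af]; exact A_integral h0 h1
  have hev : ∀ᶠ T in atTop, (Complex.Gamma (1 - s))⁻¹ *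
      ((∫ t in Ioi (0:ℝ), Af s t) + ∫ t in Ioi (0:ℝ), Bf s T t) =
      ∫ x in (0 : ℝ)..T, (Real.cos x : ℂ) * (x : ℂ) ^ (s - 1) := by
    filter_upwards [eventually_gt_atTop (0:ℝ)] with T hT
    rw [intervalIntegral.integral_of_le hT.le, fubini_cos h0 h1 hT]
    congr 1
    calc (∫ t in Ioi (0:ℝ), Af s t) + ∫ t in Ioi (0:ℝ), Bf s T t
        = ∫ t in Ioi (0:ℝ), (Af s t + Bf s T t) :=
          (integral_add hA (Bf_integrableOn h1 hT)).symm
      _ = ∫ t in Ioi (0:ℝ), (t:ℂ) ^ (-s) *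
          ∫ x in Ioc (0:ℝ) T, ((Real.cos x : ℝ) : ℂ) * Complex.exp (-((x:ℂ) * (t:ℂ))) := by
          refine setIntegral_congr_fun measurableSet_Ioi (fun t ht => ?_)
          rw [inner_cos hT.le, split_eq]
  have hlim : Tendsto (fun T : ℝ => (Complex.Gamma (1 - s))⁻¹ *
      ((∫ t in Ioi (0:ℝ), Af s t) + ∫ t in Ioi (0:ℝ), Bf s T t)) atTop
      (nhds ((Complex.Gamma (1 - s))⁻¹ * ((∫ t in Ioi (0:ℝ), Af s t) + 0))) :=
    (tendsto_const_nhds.add (tendsto_integral_Bf h1)).const_mul _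
  have hfin : (Complex.Gamma (1 - s))⁻¹ * ((∫ t in Ioi (0:ℝ), Af s t) + 0) =
      Complex.Gamma s * Complex.cos ((Real.pi : ℂ) * s / 2) := by
    rw [add_zero, hAval]
    exact final_algebra h0 h1
  rw [hfin] at hlim
  exact hlim.congr' hev
end

section
/- For a prime p > 2, an integer n with p^j exactly dividing n (j ≥ 0), and α ≥ 1, the number of solutions x mod p^{2α} of x² ≡ n² (mod p^{2α}) equals p^α if j ≥ α and 2p^j if j < α. -/
lemma aux_val_cast (m : ℕ) [NeZero m] (x : ZMod m) : ((x.val : ℤ) : ZMod m) = x := by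
  push_cast [ZMod.natCast_val, ZMod.cast_id]
  rfl

lemma aux_val_modeq (m : ℕ) [NeZero m] (t : ℤ) :
    (m:ℤ) ∣ (((t : ZMod m).val : ℤ) - t) := by
  rw [← ZMod.intCast_zmod_eq_zero_iff_dvd]
  push_cast
  rw [ZMod.natCast_val, ZMod.cast_id, sub_self]

lemma aux_nat_dvd (p j c a b : ℕ) (hp : p.Prime) (ha : a ≠ 0) (hb : b ≠ 0)
    (h : p^(j+c) ∣ a*b) (h2 : ¬ p^(j+1) ∣ b) : p^c ∣ a := by
  rw [hp.pow_dvd_iff_le_factorization (mul_ne_zero ha hb), Nat.factorization_mul ha hb] at h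
  rw [hp.pow_dvd_iff_le_factorization hb, not_le] at h2
  rw [hp.pow_dvd_iff_le_factorization ha]
  simp only [Finsupp.add_apply] at h
  omega

lemma aux_int_dvd (p j c : ℕ) (a b : ℤ) (hp : p.Prime) (ha : a ≠ 0) (hb : b ≠ 0)
    (h : (p:ℤ)^(j+c) ∣ a*b) (h2 : ¬ (p:ℤ)^(j+1) ∣ b) : (p:ℤ)^c ∣ a := by
  have ha' : a.natAbs ≠ 0 := by simpa using ha
  have hb' : b.natAbs ≠ 0 := by simpa using hb
  have h' : p^(j+c) ∣ a.natAbs * b.natAbs := by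
    rw [← Int.natAbs_mul, ← Int.natAbs_natCast (p^(j+c))]
    exact Int.natAbs_dvd_natAbs.mpr (by exact_mod_cast h)
  have h2' : ¬ p^(j+1) ∣ b.natAbs := fun hc => h2 (by exact_mod_cast Int.natCast_dvd.mpr hc)
  have := aux_nat_dvd p j c a.natAbs b.natAbs hp ha' hb' h' h2'
  exact_mod_cast Int.natCast_dvd.mpr this

lemma aux_two (p k : ℕ) (n : ℤ) (hp : p.Prime) (hodd : p ≠ 2)
    (h : (p:ℤ)^k ∣ 2 * n) : (p:ℤ)^k ∣ n := by
  have hpi : Prime (p:ℤ) := Nat.prime_iff_prime_int.mp hp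
  have hnd : ¬ (p:ℤ) ∣ 2 := by
    intro hc
    have h1 : (p:ℕ) ∣ 2 := by exact_mod_cast hc
    have := Nat.le_of_dvd (by norm_num) h1
    have := hp.two_le
    omega
  exact ((hpi.coprime_iff_not_dvd.mpr hnd).pow_left).dvd_of_dvd_mul_left h

lemma aux_key (p j c : ℕ) (n X : ℤ) (hp : p.Prime) (hodd : p ≠ 2)
    (h2 : ¬ (p:ℤ)^(j+1) ∣ n)
    (h : (p:ℤ)^(j+c) ∣ (X - n) * (X + n)) :
    (p:ℤ)^c ∣ X - n ∨ (p:ℤ)^c ∣ X + n := by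
  by_cases hb : (p:ℤ)^(j+1) ∣ X + n
  · have hb' : ¬ (p:ℤ)^(j+1) ∣ X - n := by
      intro hc
      apply h2
      apply aux_two p (j+1) n hp hodd
      have he : (X + n) - (X - n) = 2 * n := by ring
      exact he ▸ dvd_sub hb hc
    right
    rcases eq_or_ne (X + n) 0 with h0 | h0
    · simp [h0]
    rcases eq_or_ne (X - n) 0 with h0' | h0'
    · exact absurd (h0' ▸ dvd_zero _) hb'
    exact aux_int_dvd p j c (X + n) (X - n) hp h0 h0' (by rwa [mul_comm] at h) hb'
  · left
    rcases eq_or_ne (X - n) 0 with h0 | h0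
    · simp [h0]
    rcases eq_or_ne (X + n) 0 with h0' | h0'
    · exact absurd (h0' ▸ dvd_zero _) hb
    exact aux_int_dvd p j c (X - n) (X + n) hp h0 h0' h hb


lemma aux_sq (p α : ℕ) (X : ℤ) (hp : p.Prime) (h : (p:ℤ)^(2*α) ∣ X^2) : (p:ℤ)^α ∣ X := by
  rcases eq_or_ne X 0 with rfl | hX
  · exact dvd_zero _
  have hX' : X.natAbs ≠ 0 := by simpa using hX
  have h' : p^(2*α) ∣ X.natAbs^2 := by
    have : (p:ℤ)^(2*α) ∣ (X^2).natAbs := by simpa using Int.natAbs_dvd.mpr h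
    rw [Int.natAbs_pow] at this
    exact_mod_cast Int.natCast_dvd_natCast.mp (by exact_mod_cast this)
  rw [hp.pow_dvd_iff_le_factorization (pow_ne_zero 2 hX'), Nat.factorization_pow] at h'
  have : p^α ∣ X.natAbs := by
    rw [hp.pow_dvd_iff_le_factorization hX']
    simp at h'; omega
  exact_mod_cast Int.natCast_dvd.mpr this


/-- For an odd prime `p`, an integer `n` with `p^j ∥ n`, and `α ≥ 1`, the number of
solutions `x` mod `p^{2α}` of `x² ≡ n² (mod p^{2α})` equals `p^α` if `j ≥ α` and
`2 p^j` if `j < α`. -/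
theorem card_sqrt_sq_mod_prime_pow_even (p : ℕ) (hp : p.Prime) (hodd : p ≠ 2)
    (n : ℤ) (j α : ℕ) (hα : 1 ≤ α)
    (h1 : (p : ℤ) ^ j ∣ n) (h2 : ¬ (p : ℤ) ^ (j + 1) ∣ n) :
    Nat.card {x : ZMod (p ^ (2 * α)) // x ^ 2 = (n : ZMod (p ^ (2 * α))) ^ 2} =
      if α ≤ j then p ^ α else 2 * p ^ j := by
  by_cases hj : α ≤ j
  · rw [if_pos hj]
    have hN : 0 < p ^ (2*α) := pow_pos hp.pos _
    haveI : NeZero (p ^ (2*α)) := ⟨hN.ne'⟩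
    haveI : NeZero (p ^ α) := ⟨(pow_pos hp.pos α).ne'⟩
    obtain ⟨m, hm⟩ : (p:ℤ)^α ∣ n := dvd_trans (pow_dvd_pow _ hj) h1
    have hdvd_iff : ∀ a b : ℤ, ((a : ZMod (p ^ (2*α))) = (b : ZMod (p ^ (2*α)))) ↔ (p:ℤ)^(2*α) ∣ a - b := by
      intro a b
      rw [← sub_eq_zero, ← Int.cast_sub, ZMod.intCast_zmod_eq_zero_iff_dvd]
      push_cast
      rfl
    set f : ZMod (p^α) → {x : ZMod (p ^ (2 * α)) // x ^ 2 = (n : ZMod (p ^ (2 * α))) ^ 2} :=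
      fun y => ⟨(((p:ℤ)^α * (y.val : ℤ) : ℤ) : ZMod (p ^ (2*α))), by
        have : ((( (p:ℤ)^α * (y.val : ℤ))^2 : ℤ) : ZMod (p ^ (2*α))) = (((n^2 : ℤ)) : ZMod (p ^ (2*α))) := by
          rw [hdvd_iff]
          exact ⟨(y.val:ℤ)^2 - m^2, by rw [hm]; ring⟩
        push_cast at this ⊢
        exact this⟩ with hf
    have hbij : Function.Bijective f := by
      constructor
      · intro y y' h
        have h' := congrArg Subtype.val h
        simp only [hf] at h'
        rw [hdvd_iff] at h'
        have hsub : (p:ℤ)^α ∣ ((y.val:ℤ) - y'.val) := by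
          have h2α : (2*α) = α + α := by ring
          rw [h2α, pow_add] at h'
          have : (p:ℤ)^α * (y.val:ℤ) - (p:ℤ)^α * (y'.val:ℤ) = (p:ℤ)^α * ((y.val:ℤ) - y'.val) := by ring
          rw [this] at h'
          exact (mul_dvd_mul_iff_left (pow_ne_zero α (by exact_mod_cast hp.pos.ne'))).mp h'
        have : (((y.val:ℤ) - y'.val : ℤ) : ZMod (p^α)) = 0 := by
          rw [ZMod.intCast_zmod_eq_zero_iff_dvd]
          exact_mod_cast hsub
        rw [Int.cast_sub, sub_eq_zero, aux_val_cast, aux_val_cast] at this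
        exact this
      · rintro ⟨x, hx⟩
        have hX : (((x.val : ℤ)) : ZMod (p ^ (2*α))) = x := aux_val_cast _ x
        have hsq : (p:ℤ)^(2*α) ∣ (x.val:ℤ)^2 - n^2 := by
          rw [← hdvd_iff, Int.cast_pow, Int.cast_pow, hX]
          exact hx
        have hn2 : (p:ℤ)^(2*α) ∣ n^2 := ⟨m^2, by rw [hm]; ring⟩
        have hx2 : (p:ℤ)^(2*α) ∣ (x.val:ℤ)^2 := by
          have := dvd_add hsq hn2
          simpa using this
        obtain ⟨t, ht⟩ := aux_sq p α (x.val:ℤ) hp hx2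
        refine ⟨(t : ZMod (p^α)), ?_⟩
        apply Subtype.ext
        simp only [hf]
        rw [← hX, hdvd_iff]
        have : (p:ℤ)^α * (((t : ZMod (p^α)).val:ℤ)) - (x.val:ℤ)
            = (p:ℤ)^α * ((((t : ZMod (p^α)).val:ℤ)) - t) := by rw [ht]; ring
        rw [this, show (2*α) = α + α by ring, pow_add]
        exact mul_dvd_mul_left _ (by exact_mod_cast aux_val_modeq (p^α) t)
    calc Nat.card {x : ZMod (p ^ (2 * α)) // x ^ 2 = (n : ZMod (p ^ (2 * α))) ^ 2}
        = Nat.card (ZMod (p^α)) := (Nat.card_congr (Equiv.ofBijective f hbij)).symm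
      _ = p ^ α := Nat.card_zmod _
  · rw [if_neg hj]
    have hN : 0 < p ^ (2*α) := pow_pos hp.pos _
    haveI : NeZero (p ^ (2*α)) := ⟨hN.ne'⟩
    haveI : NeZero (p ^ j) := ⟨(pow_pos hp.pos j).ne'⟩
    obtain ⟨d, hd⟩ : ∃ d, α = j + d + 1 := ⟨α - j - 1, by omega⟩
    subst hd
    obtain ⟨m, hm⟩ := h1
    have hdvd_iff : ∀ a b : ℤ, ((a : ZMod (p ^ (2*(j+d+1)))) = (b : ZMod (p ^ (2*(j+d+1))))) ↔ (p:ℤ)^(2*(j+d+1)) ∣ a - b := by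
      intro a b
      rw [← sub_eq_zero, ← Int.cast_sub, ZMod.intCast_zmod_eq_zero_iff_dvd]
      push_cast
      rfl
    have claimB : ∀ c : ℤ, ¬ ((p:ℤ)^(2*(j+d+1)) ∣ 2*n + (p:ℤ)^(j+2*d+2) * c) := by
      intro c hc
      apply h2
      apply aux_two p (j+1) n hp hodd
      have hd1 : (p:ℤ)^(j+1) ∣ 2*n + (p:ℤ)^(j+2*d+2) * c :=
        dvd_trans (pow_dvd_pow _ (by omega)) hc
      have hd2 : (p:ℤ)^(j+1) ∣ (p:ℤ)^(j+2*d+2) * c :=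
        Dvd.dvd.mul_right (pow_dvd_pow _ (by omega)) c
      have := dvd_sub hd1 hd2
      simpa using this
    set f : ZMod (p^j) × Bool → {x : ZMod (p ^ (2 * (j+d+1))) // x ^ 2 = (n : ZMod (p ^ (2 * (j+d+1)))) ^ 2} :=
      fun yε => ⟨(((cond yε.2 n (-n)) + (p:ℤ)^(j+2*d+2) * (yε.1.val : ℤ) : ℤ) : ZMod (p ^ (2*(j+d+1)))), by
        obtain ⟨y, ε⟩ := yε
        have key : ((((cond ε n (-n)) + (p:ℤ)^(j+2*d+2) * (y.val : ℤ))^2 : ℤ) : ZMod (p ^ (2*(j+d+1))))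
            = (((n^2 : ℤ)) : ZMod (p ^ (2*(j+d+1)))) := by
          rw [hdvd_iff]
          cases ε
          · simp only [Bool.cond_false]
            exact ⟨-2*m*(y.val:ℤ) + (p:ℤ)^(2*d+2) * (y.val:ℤ)^2, by rw [hm]; ring⟩
          · simp only [Bool.cond_true]
            exact ⟨2*m*(y.val:ℤ) + (p:ℤ)^(2*d+2) * (y.val:ℤ)^2, by rw [hm]; ring⟩
        push_cast at key ⊢
        exact key⟩ with hf
    have hbij : Function.Bijective f := by
      constructor
      · rintro ⟨y, ε⟩ ⟨y', ε'⟩ h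
        have h' := congrArg Subtype.val h
        simp only [hf] at h'
        rw [hdvd_iff] at h'
        have hyy' : ∀ (hε : ε = ε'), y = y' := by
          intro hε
          subst hε
          have hsub : (p:ℤ)^(j+2*d+2) * ((y.val:ℤ) - (y'.val:ℤ)) =
              (cond ε n (-n) + (p:ℤ)^(j+2*d+2) * (y.val:ℤ)) - (cond ε n (-n) + (p:ℤ)^(j+2*d+2) * (y'.val:ℤ)) := by
            ring
          rw [← hsub] at h'
          have h'' : (p:ℤ)^(j+2*d+2) * (p:ℤ)^j ∣ (p:ℤ)^(j+2*d+2) * ((y.val:ℤ) - (y'.val:ℤ)) := by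
            rw [← pow_add, show (j+2*d+2) + j = 2*(j+d+1) by omega]
            exact h'
          have hj' : (p:ℤ)^j ∣ ((y.val:ℤ) - (y'.val:ℤ)) :=
            (mul_dvd_mul_iff_left (pow_ne_zero _ (by exact_mod_cast hp.pos.ne'))).mp h''
          have hz : (((y.val:ℤ) - (y'.val:ℤ) : ℤ) : ZMod (p^j)) = 0 := by
            rw [ZMod.intCast_zmod_eq_zero_iff_dvd]
            exact_mod_cast hj'
          rw [Int.cast_sub, sub_eq_zero, aux_val_cast, aux_val_cast] at hz
          exact hz
        cases ε <;> cases ε' <;> simp only [cond] at h'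
        · exact Prod.ext (hyy' rfl) rfl
        · exfalso
          apply claimB ((y'.val:ℤ) - (y.val:ℤ))
          have : 2*n + (p:ℤ)^(j+2*d+2) * ((y'.val:ℤ) - (y.val:ℤ)) =
              -((-n + (p:ℤ)^(j+2*d+2) * (y.val:ℤ)) - (n + (p:ℤ)^(j+2*d+2) * (y'.val:ℤ))) := by ring
          rw [this]
          exact (dvd_neg).mpr h'
        · exfalso
          apply claimB ((y.val:ℤ) - (y'.val:ℤ))
          have : 2*n + (p:ℤ)^(j+2*d+2) * ((y.val:ℤ) - (y'.val:ℤ)) =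
              (n + (p:ℤ)^(j+2*d+2) * (y.val:ℤ)) - (-n + (p:ℤ)^(j+2*d+2) * (y'.val:ℤ)) := by ring
          rw [this]
          exact h'
        · exact Prod.ext (hyy' rfl) rfl
      · rintro ⟨x, hx⟩
        have hX : (((x.val : ℤ)) : ZMod (p ^ (2*(j+d+1)))) = x := aux_val_cast _ x
        have hsq : (p:ℤ)^(2*(j+d+1)) ∣ ((x.val:ℤ) - n) * ((x.val:ℤ) + n) := by
          have h0 : (p:ℤ)^(2*(j+d+1)) ∣ (x.val:ℤ)^2 - n^2 := by
            rw [← hdvd_iff, Int.cast_pow, Int.cast_pow, hX]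
            exact hx
          have he : ((x.val:ℤ) - n) * ((x.val:ℤ) + n) = (x.val:ℤ)^2 - n^2 := by ring
          rw [he]
          exact h0
        have hsq' : (p:ℤ)^(j + (j+2*d+2)) ∣ ((x.val:ℤ) - n) * ((x.val:ℤ) + n) := by
          rw [show j + (j+2*d+2) = 2*(j+d+1) by omega]
          exact hsq
        rcases aux_key p j (j+2*d+2) n (x.val:ℤ) hp hodd h2 hsq' with hcase | hcase
        · obtain ⟨t, ht⟩ := hcase
          refine ⟨((t : ZMod (p^j)), true), ?_⟩
          apply Subtype.ext
          simp only [hf, cond]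
          rw [← hX, hdvd_iff]
          have he : n + (p:ℤ)^(j+2*d+2) * (((t : ZMod (p^j)).val:ℤ)) - (x.val:ℤ)
              = (p:ℤ)^(j+2*d+2) * ((((t : ZMod (p^j)).val:ℤ)) - t) := by
            have : (x.val:ℤ) = n + (p:ℤ)^(j+2*d+2) * t := by linarith [ht]
            rw [this]; ring
          rw [he]
          have hdd : (p:ℤ)^(j+2*d+2) * (p:ℤ)^j ∣ (p:ℤ)^(j+2*d+2) * ((((t : ZMod (p^j)).val:ℤ)) - t) :=
            mul_dvd_mul_left _ (by exact_mod_cast aux_val_modeq (p^j) t)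
          rw [← pow_add, show (j+2*d+2) + j = 2*(j+d+1) by omega] at hdd
          exact hdd
        · obtain ⟨t, ht⟩ := hcase
          refine ⟨((t : ZMod (p^j)), false), ?_⟩
          apply Subtype.ext
          simp only [hf, cond]
          rw [← hX, hdvd_iff]
          have he : -n + (p:ℤ)^(j+2*d+2) * (((t : ZMod (p^j)).val:ℤ)) - (x.val:ℤ)
              = (p:ℤ)^(j+2*d+2) * ((((t : ZMod (p^j)).val:ℤ)) - t) := by
            have : (x.val:ℤ) = -n + (p:ℤ)^(j+2*d+2) * t := by linarith [ht]
            rw [this]; ring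
          rw [he]
          have hdd : (p:ℤ)^(j+2*d+2) * (p:ℤ)^j ∣ (p:ℤ)^(j+2*d+2) * ((((t : ZMod (p^j)).val:ℤ)) - t) :=
            mul_dvd_mul_left _ (by exact_mod_cast aux_val_modeq (p^j) t)
          rw [← pow_add, show (j+2*d+2) + j = 2*(j+d+1) by omega] at hdd
          exact hdd
    calc Nat.card {x : ZMod (p ^ (2 * (j+d+1))) // x ^ 2 = (n : ZMod (p ^ (2 * (j+d+1)))) ^ 2}
        = Nat.card (ZMod (p^j) × Bool) := (Nat.card_congr (Equiv.ofBijective f hbij)).symm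
      _ = 2 * p ^ j := by
          rw [Nat.card_prod, Nat.card_zmod]
          simp [Nat.card_eq_fintype_card, mul_comm]
end

section
/- For α ≥ 2 and an integer n with 2^j exactly dividing n, the number of solutions x mod 2^{2α} of x² ≡ n² (mod 2^{2α}) equals 2^α if j ≥ α − 2 and 2^{j+2} if j < α − 2. -/
/-- Every nonzero integer is `2^k * (odd)` for some exact `k`. -/
private lemma exists_exact_two_pow (x : ℤ) (hx : x ≠ 0) :
    ∃ k : ℕ, (2 : ℤ) ^ k ∣ x ∧ ¬ (2 : ℤ) ^ (k + 1) ∣ x := by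
  refine ⟨x.natAbs.factorization 2, ?_, ?_⟩
  · have h : (2 : ℕ) ^ (x.natAbs.factorization 2) ∣ x.natAbs := Nat.ordProj_dvd _ 2
    have h' : (2 : ℤ) ^ (x.natAbs.factorization 2) ∣ (x.natAbs : ℤ) := by exact_mod_cast h
    exact Int.dvd_natAbs.mp h'
  · intro h
    have h' : (2 : ℤ) ^ (x.natAbs.factorization 2 + 1) ∣ (x.natAbs : ℤ) :=
      Int.dvd_natAbs.mpr h
    have h'' : (2 : ℕ) ^ (x.natAbs.factorization 2 + 1) ∣ x.natAbs := by exact_mod_cast h'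
    exact Nat.pow_succ_factorization_not_dvd (Int.natAbs_ne_zero.mpr hx) Nat.prime_two h''

/-- If `2^m ∣ s*t` and `2^k` exactly divides `s` then `2^(m-k) ∣ t`. -/
private lemma dvd_of_exact_dvd {m k : ℕ} {s t : ℤ} (hm : k ≤ m)
    (hprod : (2 : ℤ) ^ m ∣ s * t) (hk1 : (2 : ℤ) ^ k ∣ s) (hk2 : ¬ (2 : ℤ) ^ (k + 1) ∣ s) :
    (2 : ℤ) ^ (m - k) ∣ t := by
  obtain ⟨u, rfl⟩ := hk1
  have hu : ¬ (2 : ℤ) ∣ u := by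
    rintro ⟨v, rfl⟩
    exact hk2 ⟨v, by ring⟩
  have h1 : (2 : ℤ) ^ k * (2 : ℤ) ^ (m - k) ∣ (2 : ℤ) ^ k * (u * t) := by
    rw [← pow_add, Nat.add_sub_cancel' hm, ← mul_assoc]
    exact hprod
  have h2 : (2 : ℤ) ^ (m - k) ∣ u * t :=
    (mul_dvd_mul_iff_left (pow_ne_zero k (two_ne_zero))).mp h1
  exact Int.prime_two.pow_dvd_of_dvd_mul_left _ hu h2

/-- The key integer lemma: description of solutions of `a² ≡ n² (mod 2^{2α})`. -/
private lemma key_int (n : ℤ) (j α : ℕ) (hα : 2 ≤ α)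
    (h1 : (2 : ℤ) ^ j ∣ n) (h2 : ¬ (2 : ℤ) ^ (j + 1) ∣ n) (a : ℤ) :
    (2 : ℤ) ^ (2 * α) ∣ a ^ 2 - n ^ 2 ↔
      ((2 : ℤ) ^ (max α (2 * α - (j + 1))) ∣ a - n ∨
       (2 : ℤ) ^ (max α (2 * α - (j + 1))) ∣ a + n) := by
  set c := max α (2 * α - (j + 1)) with hc
  have hcα : α ≤ c := le_max_left _ _
  have hc2 : 2 * α ≤ c + (j + 1) := by
    have := le_max_right α (2 * α - (j + 1))
    omega
  constructor
  · intro hdvd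
    rcases eq_or_ne a n with rfl | hne
    · exact Or.inl (by simp)
    -- a - n ≠ 0
    have hsub : a - n ≠ 0 := sub_ne_zero.mpr hne
    by_cases hjα : α ≤ j
    · -- then 2^{2α} ∣ n², so 2^{2α} ∣ a², so 2^α ∣ a, and 2^α ∣ n
      have hn2 : (2 : ℤ) ^ (2 * α) ∣ n ^ 2 := by
        have : (2 : ℤ) ^ (2 * α) ∣ ((2 : ℤ) ^ j) ^ 2 := by
          rw [← pow_mul]
          exact pow_dvd_pow 2 (by omega)
        exact this.trans (pow_dvd_pow_of_dvd h1 2)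
      have ha2 : (2 : ℤ) ^ (2 * α) ∣ a ^ 2 := by
        have := dvd_add hdvd hn2
        simpa using this
      have ha : (2 : ℤ) ^ α ∣ a := by
        have : ((2 : ℤ) ^ α) ^ 2 ∣ a ^ 2 := by
          rwa [← pow_mul, mul_comm α 2]
        exact (Int.pow_dvd_pow_iff two_ne_zero).mp this
      have hn : (2 : ℤ) ^ α ∣ n := (pow_dvd_pow 2 hjα).trans h1
      have hcval : c = α := by
        have : 2 * α - (j + 1) ≤ α := by omega
        simp [hc, max_eq_left this]
      rw [hcval]
      exact Or.inl (dvd_sub ha hn)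
    · -- j < α
      push_neg at hjα
      obtain ⟨k, hk1, hk2⟩ := exists_exact_two_pow (a - n) hsub
      have hprod : (2 : ℤ) ^ (2 * α) ∣ (a - n) * (a + n) := by
        have : (a - n) * (a + n) = a ^ 2 - n ^ 2 := by ring
        rwa [this]
      by_cases hkj : k ≤ j + 1
      · -- 2^{2α-k} ∣ a + n, and 2α - k ≥ c
        have := dvd_of_exact_dvd (by omega) hprod hk1 hk2
        refine Or.inr ((pow_dvd_pow 2 ?_).trans this)
        omega
      · -- k ≥ j + 2 : then 2^{j+1} exactly divides a + n
        push_neg at hkj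
        have h2n : (2 : ℤ) ^ (j + 1) ∣ 2 * n := by
          obtain ⟨u, rfl⟩ := h1
          exact ⟨u, by ring⟩
        have hap1 : (2 : ℤ) ^ (j + 1) ∣ a + n := by
          have h' : (2 : ℤ) ^ (j + 1) ∣ a - n := (pow_dvd_pow 2 (by omega)).trans hk1
          have := dvd_add h' h2n
          simpa [show a - n + 2 * n = a + n by ring] using this
        have hap2 : ¬ (2 : ℤ) ^ (j + 2) ∣ a + n := by
          intro h'
          have hsub' : (2 : ℤ) ^ (j + 2) ∣ a - n := (pow_dvd_pow 2 (by omega)).trans hk1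
          have : (2 : ℤ) ^ (j + 2) ∣ 2 * n := by
            have := dvd_sub h' hsub'
            simpa [show a + n - (a - n) = 2 * n by ring] using this
          obtain ⟨v, hv⟩ := this
          apply h2
          refine ⟨v, ?_⟩
          have : (2 : ℤ) * n = 2 * (2 ^ (j + 1) * v) := by
            rw [hv]; ring
          exact mul_left_cancel₀ two_ne_zero this
        have hprod' : (2 : ℤ) ^ (2 * α) ∣ (a + n) * (a - n) := by
          rwa [mul_comm (a - n) (a + n)] at hprod
        have := dvd_of_exact_dvd (m := 2 * α) (by omega) hprod' hap1 hap2
        refine Or.inl ((pow_dvd_pow 2 ?_).trans this)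
        omega
  · -- backward direction
    have hn2 : (2 : ℤ) ^ (2 * α) ∣ 2 ^ (c + 1 + j) := pow_dvd_pow 2 (by omega)
    have hcc : (2 : ℤ) ^ (2 * α) ∣ 2 ^ (c + c) := pow_dvd_pow 2 (by omega)
    rintro (⟨t, ht⟩ | ⟨t, ht⟩)
    · obtain ⟨u, hu⟩ := h1
      have : a ^ 2 - n ^ 2 = 2 ^ (c + 1 + j) * (u * t) + 2 ^ (c + c) * t ^ 2 := by
        have ha : a = n + 2 ^ c * t := by linarith [ht]
        rw [ha, hu]; ring
      rw [this]
      exact dvd_add (hn2.trans (Dvd.dvd.mul_right dvd_rfl _)) (hcc.trans (Dvd.dvd.mul_right dvd_rfl _))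
    · obtain ⟨u, hu⟩ := h1
      have : a ^ 2 - n ^ 2 = -(2 ^ (c + 1 + j) * (u * t)) + 2 ^ (c + c) * t ^ 2 := by
        have ha : a = -n + 2 ^ c * t := by linarith [ht]
        rw [ha, hu]; ring
      rw [this]
      exact dvd_add ((hn2.trans (Dvd.dvd.mul_right dvd_rfl _)).neg_right)
        (hcc.trans (Dvd.dvd.mul_right dvd_rfl _))

/-- For `α ≥ 2` and an integer `n` with `2^j ∥ n`, the number of solutions `x` mod `2^{2α}`
of `x² ≡ n² (mod 2^{2α})` equals `2^α` if `j ≥ α − 2` and `2^{j+2}` if `j < α − 2`. -/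
theorem card_sqrt_sq_mod_two_pow_even (n : ℤ) (j α : ℕ) (hα : 2 ≤ α)
    (h1 : (2 : ℤ) ^ j ∣ n) (h2 : ¬ (2 : ℤ) ^ (j + 1) ∣ n) :
    Nat.card {x : ZMod (2 ^ (2 * α)) // x ^ 2 = (n : ZMod (2 ^ (2 * α))) ^ 2} =
      if α ≤ j + 2 then 2 ^ α else 2 ^ (j + 2) := by
  set c := max α (2 * α - (j + 1)) with hc
  have hcα : α ≤ c := le_max_left _ _
  have hc2α : c ≤ 2 * α := by
    have h1' : 2 * α - (j + 1) ≤ 2 * α := Nat.sub_le _ _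
    exact max_le (by omega) h1'
  haveI : NeZero ((2 : ℕ) ^ (2 * α)) := ⟨pow_ne_zero _ two_ne_zero⟩
  haveI : NeZero ((2 : ℕ) ^ c) := ⟨pow_ne_zero _ two_ne_zero⟩
  have hdvd : (2 : ℕ) ^ c ∣ 2 ^ (2 * α) := pow_dvd_pow 2 hc2α
  set f : ZMod (2 ^ (2 * α)) →+* ZMod (2 ^ c) := ZMod.castHom hdvd _ with hf
  -- membership description
  have hmem : ∀ x : ZMod (2 ^ (2 * α)), x ^ 2 = (n : ZMod (2 ^ (2 * α))) ^ 2 ↔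
      (f x = (n : ZMod (2 ^ c)) ∨ f x = -(n : ZMod (2 ^ c))) := by
    intro x
    obtain ⟨a, rfl⟩ := ZMod.intCast_surjective x
    have e1 : ((a : ZMod (2 ^ (2 * α))) ^ 2 = (n : ZMod (2 ^ (2 * α))) ^ 2) ↔
        (2 : ℤ) ^ (2 * α) ∣ a ^ 2 - n ^ 2 := by
      rw [← sub_eq_zero]
      have : ((a : ZMod (2 ^ (2 * α))) ^ 2 - (n : ZMod (2 ^ (2 * α))) ^ 2) =
          ((a ^ 2 - n ^ 2 : ℤ) : ZMod (2 ^ (2 * α))) := by push_cast; ring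
      rw [this, ZMod.intCast_zmod_eq_zero_iff_dvd]
      push_cast
      rfl
    have e2 : f ((a : ℤ) : ZMod (2 ^ (2 * α))) = ((a : ℤ) : ZMod (2 ^ c)) := map_intCast f a
    have e3 : (((a : ℤ) : ZMod (2 ^ c)) = (n : ZMod (2 ^ c))) ↔ (2 : ℤ) ^ c ∣ a - n := by
      rw [← sub_eq_zero]
      have : ((a : ℤ) : ZMod (2 ^ c)) - (n : ZMod (2 ^ c)) = ((a - n : ℤ) : ZMod (2 ^ c)) := by
        push_cast; ring
      rw [this, ZMod.intCast_zmod_eq_zero_iff_dvd]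
      push_cast
      rfl
    have e4 : (((a : ℤ) : ZMod (2 ^ c)) = -(n : ZMod (2 ^ c))) ↔ (2 : ℤ) ^ c ∣ a + n := by
      rw [← sub_eq_zero]
      have : ((a : ℤ) : ZMod (2 ^ c)) - -(n : ZMod (2 ^ c)) = ((a + n : ℤ) : ZMod (2 ^ c)) := by
        push_cast; ring
      rw [this, ZMod.intCast_zmod_eq_zero_iff_dvd]
      push_cast
      rfl
    rw [e1, e2, e3, e4]
    exact key_int n j α hα h1 h2 a
  -- surjectivity of f
  have hsurj : Function.Surjective f := by
    intro b
    obtain ⟨a, rfl⟩ := ZMod.intCast_surjective b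
    exact ⟨((a : ℤ) : ZMod (2 ^ (2 * α))), map_intCast f a⟩
  -- all fibers of f have the same cardinality
  have fib_equiv : ∀ b : ZMod (2 ^ c), {x // f x = b} ≃ {x // f x = 0} := by
    intro b
    have hx₀ : f (hsurj b).choose = b := (hsurj b).choose_spec
    set x₀ := (hsurj b).choose
    refine ⟨fun p => ⟨p.1 - x₀, by rw [map_sub, p.2, hx₀, sub_self]⟩,
        fun p => ⟨p.1 + x₀, by rw [map_add, p.2, hx₀, zero_add]⟩, ?_, ?_⟩
    · intro p; ext; simp
    · intro p; ext; simp
  -- the kernel fiber has cardinality 2^(2α - c)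
  have hK : Nat.card {x : ZMod (2 ^ (2 * α)) // f x = 0} = 2 ^ (2 * α - c) := by
    have hsum : Fintype.card (ZMod (2 ^ (2 * α))) =
        ∑ b : ZMod (2 ^ c), Fintype.card {x // f x = b} := by
      rw [← Fintype.card_sigma]
      exact Fintype.card_congr (Equiv.sigmaFiberEquiv f).symm
    have hall : ∀ b : ZMod (2 ^ c),
        Fintype.card {x // f x = b} = Fintype.card {x // f x = 0} :=
      fun b => Fintype.card_congr (fib_equiv b)
    rw [Finset.sum_congr rfl (fun b _ => hall b), Finset.sum_const, Finset.card_univ,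
      smul_eq_mul, ZMod.card, ZMod.card] at hsum
    have hKcard : Nat.card {x : ZMod (2 ^ (2 * α)) // f x = 0} =
        Fintype.card {x : ZMod (2 ^ (2 * α)) // f x = 0} := Nat.card_eq_fintype_card
    rw [hKcard]
    have h' : 2 ^ c * 2 ^ (2 * α - c) =
        2 ^ c * Fintype.card {x : ZMod (2 ^ (2 * α)) // f x = 0} := by
      rw [← pow_add, Nat.add_sub_cancel' hc2α]
      exact hsum
    exact (Nat.eq_of_mul_eq_mul_left
      (Nat.pos_of_ne_zero (pow_ne_zero _ two_ne_zero)) h'.symm)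
  -- card of each fiber
  have hfib : ∀ b : ZMod (2 ^ c), Nat.card {x // f x = b} = 2 ^ (2 * α - c) := by
    intro b
    rw [← hK]
    exact Nat.card_congr (fib_equiv b)
  -- whether n = -n in ZMod (2^c)
  have hiff : ((n : ZMod (2 ^ c)) = -(n : ZMod (2 ^ c))) ↔ c ≤ j + 1 := by
    have hcast : ((n : ZMod (2 ^ c)) = -(n : ZMod (2 ^ c))) ↔ (2 : ℤ) ^ c ∣ 2 * n := by
      rw [← sub_eq_zero]
      have : (n : ZMod (2 ^ c)) - -(n : ZMod (2 ^ c)) = ((2 * n : ℤ) : ZMod (2 ^ c)) := by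
        push_cast; ring
      rw [this, ZMod.intCast_zmod_eq_zero_iff_dvd]
      push_cast
      rfl
    rw [hcast]
    constructor
    · intro hd
      by_contra hlt
      push_neg at hlt
      have : (2 : ℤ) ^ (j + 2) ∣ 2 * n := (pow_dvd_pow 2 (by omega)).trans hd
      obtain ⟨v, hv⟩ := this
      apply h2
      refine ⟨v, mul_left_cancel₀ (two_ne_zero) ?_⟩
      rw [hv]; ring
    · intro hle
      obtain ⟨u, rfl⟩ := h1
      exact (pow_dvd_pow 2 hle).trans ⟨u, by ring⟩
  -- rewrite the set we're counting
  have hcard : Nat.card {x : ZMod (2 ^ (2 * α)) // x ^ 2 = (n : ZMod (2 ^ (2 * α))) ^ 2} =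
      Nat.card {x : ZMod (2 ^ (2 * α)) // f x = (n : ZMod (2 ^ c)) ∨ f x = -(n : ZMod (2 ^ c))} :=
    Nat.card_congr (Equiv.subtypeEquivRight hmem)
  rw [hcard]
  by_cases hne : (n : ZMod (2 ^ c)) = -(n : ZMod (2 ^ c))
  · -- single class : answer 2^α, and c = α
    have hcval : c = α := by
      have hj1 : α ≤ j + 1 := le_trans hcα (hiff.mp hne)
      have : 2 * α - (j + 1) ≤ α := by omega
      rw [hc]; exact max_eq_left this
    have : Nat.card {x : ZMod (2 ^ (2 * α)) //
        f x = (n : ZMod (2 ^ c)) ∨ f x = -(n : ZMod (2 ^ c))} =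
        Nat.card {x : ZMod (2 ^ (2 * α)) // f x = (n : ZMod (2 ^ c))} := by
      apply Nat.card_congr
      apply Equiv.subtypeEquivRight
      intro x
      rw [← hne]
      tauto
    rw [this, hfib, hcval]
    have hj1 : α ≤ j + 1 := le_trans hcα (hiff.mp hne)
    rw [if_pos (by omega)]
    congr 1
    omega
  · -- two distinct classes : answer 2 * 2^(2α - c) = 2^(j+2)
    have hj1 : ¬ (c ≤ j + 1) := fun h => hne (hiff.mpr h)
    have hαj : j + 2 ≤ α := by
      by_contra hcon
      push_neg at hcon
      apply hj1
      rw [hc]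
      exact max_le (by omega) (by omega)
    have hcval : c = 2 * α - (j + 1) := by
      rw [hc]; exact max_eq_right (by omega)
    -- split the subtype as a disjoint union
    have hsplit : Nat.card {x : ZMod (2 ^ (2 * α)) //
        f x = (n : ZMod (2 ^ c)) ∨ f x = -(n : ZMod (2 ^ c))} =
        Nat.card {x : ZMod (2 ^ (2 * α)) // f x = (n : ZMod (2 ^ c))} +
        Nat.card {x : ZMod (2 ^ (2 * α)) // f x = -(n : ZMod (2 ^ c))} := by
      rw [Nat.card_eq_fintype_card, Nat.card_eq_fintype_card, Nat.card_eq_fintype_card]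
      have e : {x : ZMod (2 ^ (2 * α)) //
          f x = (n : ZMod (2 ^ c)) ∨ f x = -(n : ZMod (2 ^ c))} ≃
          {x : ZMod (2 ^ (2 * α)) // f x = (n : ZMod (2 ^ c))} ⊕
          {x : ZMod (2 ^ (2 * α)) // f x = -(n : ZMod (2 ^ c))} :=
        (subtypeOrEquiv _ _ (by
          rw [disjoint_iff_inf_le]
          rintro x ⟨hx1, hx2⟩
          exact hne (hx1.symm.trans hx2)))
      rw [Fintype.card_congr e, Fintype.card_sum]
    rw [hsplit, hfib, hfib]
    have h2αc : 2 * α - c = j + 1 := by omega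
    rw [h2αc]
    rcases Nat.lt_or_ge (j + 2) α with hlt | hge
    · rw [if_neg (by omega)]
      ring
    · have : α = j + 2 := by omega
      rw [if_pos (by omega), this]
      ring
end

section
/- For α ≥ 2 and an integer n with 2^j exactly dividing n, the number of solutions x mod 2^{2α+1} of x² ≡ n² (mod 2^{2α+1}) equals 2^α if j ≥ α and 2^{j+2} if j < α. -/
/-- Every nonzero integer is a power of two times an odd integer. -/
private lemma aux_odd_factor (e : ℤ) (he : e ≠ 0) :
    ∃ s : ℕ, ∃ u : ℤ, ¬(2:ℤ) ∣ u ∧ e = 2 ^ s * u := by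
  by_cases h2 : (2:ℤ) ∣ e
  · obtain ⟨f, rfl⟩ := h2
    have hf : f ≠ 0 := by rintro rfl; simp at he
    have hlt : f.natAbs < (2 * f).natAbs := by
      have := Int.natAbs_pos.mpr hf
      simp [Int.natAbs_mul]; omega
    obtain ⟨s, u, hu, h⟩ := aux_odd_factor f hf
    exact ⟨s + 1, u, hu, by rw [h, pow_succ]; ring⟩
  · exact ⟨0, e, h2, by ring⟩
termination_by e.natAbs

private lemma aux_cancel_two (s T : ℕ) (u : ℤ) (hu : ¬(2:ℤ) ∣ u) (hs : s < T)
    (h : (2:ℤ) ^ T ∣ 2 ^ s * u) : False := by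
  have h1 : (2:ℤ) ^ s * 2 ∣ 2 ^ s * u :=
    dvd_trans (by rw [← pow_succ]; exact pow_dvd_pow 2 hs) h
  exact hu ((mul_dvd_mul_iff_left (pow_ne_zero s (two_ne_zero))).mp h1)

private lemma aux_case1 (n d : ℤ) (j α : ℕ) (hj : α ≤ j) (u' : ℤ)
    (hu' : ¬(2:ℤ) ∣ u') (hn : n = 2 ^ j * u') :
    (2:ℤ) ^ (2 * α + 1) ∣ d ^ 2 - n ^ 2 ↔ (2:ℤ) ^ (α + 1) ∣ d - n := by
  have hfact : d ^ 2 - n ^ 2 = (d - n) * (d + n) := by ring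
  constructor
  · intro h
    by_contra hc
    have hne : d - n ≠ 0 := by rintro h0; exact hc (h0 ▸ dvd_zero _)
    obtain ⟨s, u, hu, he⟩ := aux_odd_factor _ hne
    have hs : s < α + 1 := by
      by_contra hs'
      exact hc (he ▸ Dvd.dvd.mul_right (pow_dvd_pow 2 (not_lt.mp hs')) u)
    have key : (2:ℤ) ^ s * 2 ^ (j + 1 - s) = 2 ^ (j + 1) := by
      rw [← pow_add]; congr 1; omega
    have hdn : d + n = 2 ^ s * (u + 2 ^ (j + 1 - s) * u') := by
      have h1 : d + n = 2 ^ s * u + 2 ^ (j + 1) * u' := by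
        rw [show d + n = (d - n) + 2 * n by ring, he, hn, pow_succ]; ring
      rw [h1, mul_add, ← mul_assoc, key]
    have hw : ¬ (2:ℤ) ∣ (u + 2 ^ (j + 1 - s) * u') := by
      intro hdvd
      have h2 : (2:ℤ) ∣ 2 ^ (j + 1 - s) * u' :=
        Dvd.dvd.mul_right (dvd_pow_self 2 (by omega : j + 1 - s ≠ 0)) u'
      exact hu (by have := dvd_sub hdvd h2; simpa using this)
    have hprod : ¬ (2:ℤ) ∣ u * (u + 2 ^ (j + 1 - s) * u') :=
      fun hd => ((Int.prime_two.dvd_mul.mp hd).elim hu hw)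
    refine aux_cancel_two (2 * s) (2 * α + 1) _ hprod (by omega) ?_
    have heq : (d - n) * (d + n) = 2 ^ (2 * s) * (u * (u + 2 ^ (j + 1 - s) * u')) := by
      rw [he, hdn, two_mul, pow_add]; ring
    rw [hfact, heq] at h; exact h
  · rintro ⟨c, hc⟩
    have key : (2:ℤ) ^ (α + 1) * 2 ^ (j - α) = 2 ^ (j + 1) := by
      rw [← pow_add]; congr 1; omega
    have hdn : d + n = 2 ^ (α + 1) * (c + 2 ^ (j - α) * u') := by
      have h1 : d + n = 2 ^ (α + 1) * c + 2 ^ (j + 1) * u' := by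
        rw [show d + n = (d - n) + 2 * n by ring, hc, hn, pow_succ]; ring
      rw [h1, mul_add, ← mul_assoc, key]
    refine ⟨2 * c * (c + 2 ^ (j - α) * u'), ?_⟩
    have hpow : (2:ℤ) ^ (α + 1) * 2 ^ (α + 1) = 2 ^ (2 * α + 1) * 2 := by
      rw [← pow_add, ← pow_succ]; congr 1; omega
    rw [hfact, hc, hdn]
    linear_combination (c * (c + 2 ^ (j - α) * u')) * hpow

private lemma aux_case2 (n d : ℤ) (j α : ℕ) (hj : j < α) (u' : ℤ)
    (hu' : ¬(2:ℤ) ∣ u') (hn : n = 2 ^ j * u') :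
    (2:ℤ) ^ (2 * α + 1) ∣ d ^ 2 - n ^ 2 ↔
      ((2:ℤ) ^ (2 * α - j) ∣ d - n ∨ (2:ℤ) ^ (2 * α - j) ∣ d + n) := by
  have hfact : d ^ 2 - n ^ 2 = (d - n) * (d + n) := by ring
  constructor
  · intro h
    by_contra hc
    push_neg at hc
    obtain ⟨hc1, hc2⟩ := hc
    have hne : d - n ≠ 0 := by rintro h0; exact hc1 (h0 ▸ dvd_zero _)
    obtain ⟨s, u, hu, he⟩ := aux_odd_factor _ hne
    have hs : s < 2 * α - j := by
      by_contra hs'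
      exact hc1 (he ▸ Dvd.dvd.mul_right (pow_dvd_pow 2 (not_lt.mp hs')) u)
    rcases lt_trichotomy s (j + 1) with hsj | hsj | hsj
    · -- s < j+1 : both factors have valuation exactly s, 2s ≤ 2j < 2α+1
      have key : (2:ℤ) ^ s * 2 ^ (j + 1 - s) = 2 ^ (j + 1) := by
        rw [← pow_add]; congr 1; omega
      have hdn : d + n = 2 ^ s * (u + 2 ^ (j + 1 - s) * u') := by
        have h1 : d + n = 2 ^ s * u + 2 ^ (j + 1) * u' := by
          rw [show d + n = (d - n) + 2 * n by ring, he, hn, pow_succ]; ring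
        rw [h1, mul_add, ← mul_assoc, key]
      have hw : ¬ (2:ℤ) ∣ (u + 2 ^ (j + 1 - s) * u') := by
        intro hdvd
        have h2 : (2:ℤ) ∣ 2 ^ (j + 1 - s) * u' :=
          Dvd.dvd.mul_right (dvd_pow_self 2 (by omega : j + 1 - s ≠ 0)) u'
        exact hu (by have := dvd_sub hdvd h2; simpa using this)
      have hprod : ¬ (2:ℤ) ∣ u * (u + 2 ^ (j + 1 - s) * u') :=
        fun hd => ((Int.prime_two.dvd_mul.mp hd).elim hu hw)
      refine aux_cancel_two (2 * s) (2 * α + 1) _ hprod (by omega) ?_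
      have heq : (d - n) * (d + n) = 2 ^ (2 * s) * (u * (u + 2 ^ (j + 1 - s) * u')) := by
        rw [he, hdn, two_mul, pow_add]; ring
      rw [hfact, heq] at h; exact h
    · -- s = j+1
      subst hsj
      have hdn : d + n = 2 ^ (j + 1) * (u + u') := by
        rw [show d + n = (d - n) + 2 * n by ring, he, hn, pow_succ]; ring
      have heq : (d - n) * (d + n) = 2 ^ (2 * j + 2) * (u * (u + u')) := by
        rw [he, hdn]
        rw [show 2 * j + 2 = (j + 1) + (j + 1) by omega, pow_add]; ring
      rw [hfact, heq] at h
      obtain ⟨w, hwv⟩ := h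
      have hpw : (2:ℤ) ^ (2 * α + 1) = 2 ^ (2 * j + 2) * 2 ^ (2 * α - 2 * j - 1) := by
        rw [← pow_add]; congr 1; omega
      have hcancel : u * (u + u') = 2 ^ (2 * α - 2 * j - 1) * w := by
        have h0 : (2:ℤ) ^ (2 * j + 2) ≠ 0 := pow_ne_zero _ two_ne_zero
        apply mul_left_cancel₀ h0
        linear_combination hwv + w * hpw
      have hdvd : (2:ℤ) ^ (2 * α - 2 * j - 1) ∣ u * (u + u') := ⟨w, hcancel⟩
      have hcop : IsCoprime ((2:ℤ) ^ (2 * α - 2 * j - 1)) u :=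
        IsCoprime.pow_left (Int.prime_two.coprime_iff_not_dvd.mpr hu)
      have hdvd2 : (2:ℤ) ^ (2 * α - 2 * j - 1) ∣ u + u' :=
        hcop.dvd_of_dvd_mul_left hdvd
      refine hc2 ?_
      obtain ⟨v, hv⟩ := hdvd2
      refine ⟨v, ?_⟩
      rw [hdn, hv, ← mul_assoc, ← pow_add]
      congr 2; omega
    · -- s > j+1 : product = 2^(s+j+1) * odd, s+j+1 < 2α+1
      have key : (2:ℤ) ^ (j + 1) * 2 ^ (s - (j + 1)) = 2 ^ s := by
        rw [← pow_add]; congr 1; omega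
      have hdn : d + n = 2 ^ (j + 1) * (2 ^ (s - (j + 1)) * u + u') := by
        have h1 : d + n = 2 ^ s * u + 2 ^ (j + 1) * u' := by
          rw [show d + n = (d - n) + 2 * n by ring, he, hn, pow_succ]; ring
        rw [h1, mul_add, ← mul_assoc, key]
      have hw : ¬ (2:ℤ) ∣ (2 ^ (s - (j + 1)) * u + u') := by
        intro hdvd
        have h2 : (2:ℤ) ∣ 2 ^ (s - (j + 1)) * u :=
          Dvd.dvd.mul_right (dvd_pow_self 2 (by omega : s - (j + 1) ≠ 0)) u
        exact hu' (by have := dvd_sub hdvd h2; simpa using this)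
      have hprod : ¬ (2:ℤ) ∣ u * (2 ^ (s - (j + 1)) * u + u') :=
        fun hd => ((Int.prime_two.dvd_mul.mp hd).elim hu hw)
      refine aux_cancel_two (s + j + 1) (2 * α + 1) _ hprod (by omega) ?_
      have heq : (d - n) * (d + n)
          = 2 ^ (s + j + 1) * (u * (2 ^ (s - (j + 1)) * u + u')) := by
        rw [he, hdn, show s + j + 1 = s + (j + 1) by omega, pow_add]; ring
      rw [hfact, heq] at h; exact h
  · rintro (⟨c, hc⟩ | ⟨c, hc⟩)
    · have hd : d = n + 2 ^ (2 * α - j) * c := by linarith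
      refine ⟨c * (2 ^ (2 * α - 2 * j - 1) * c + u'), ?_⟩
      have hp1 : (2:ℤ) ^ (2 * α - j) * 2 ^ (2 * α - j)
          = 2 ^ (2 * α + 1) * 2 ^ (2 * α - 2 * j - 1) := by
        rw [← pow_add, ← pow_add]; congr 1; omega
      have hp2 : (2:ℤ) ^ (2 * α - j) * (2 * 2 ^ j) = 2 ^ (2 * α + 1) := by
        rw [show (2:ℤ) * 2 ^ j = 2 ^ (j + 1) by rw [pow_succ]; ring, ← pow_add]
        congr 1; omega
      rw [hd, hn]
      linear_combination (c ^ 2) * hp1 + (c * u') * hp2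
    · have hd : d = -n + 2 ^ (2 * α - j) * c := by linarith
      refine ⟨c * (2 ^ (2 * α - 2 * j - 1) * c - u'), ?_⟩
      have hp1 : (2:ℤ) ^ (2 * α - j) * 2 ^ (2 * α - j)
          = 2 ^ (2 * α + 1) * 2 ^ (2 * α - 2 * j - 1) := by
        rw [← pow_add, ← pow_add]; congr 1; omega
      have hp2 : (2:ℤ) ^ (2 * α - j) * (2 * 2 ^ j) = 2 ^ (2 * α + 1) := by
        rw [show (2:ℤ) * 2 ^ j = 2 ^ (j + 1) by rw [pow_succ]; ring, ← pow_add]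
        congr 1; omega
      rw [hd, hn]
      linear_combination (c ^ 2) * hp1 - (c * u') * hp2


private lemma aux_count (m K : ℕ) (hK : K ≤ m) (r : ℤ) :
    ((Finset.range (2 ^ m)).filter (fun i : ℕ => (2:ℤ) ^ K ∣ (i : ℤ) - r)).card
      = 2 ^ (m - K) := by
  classical
  have hPpos : 0 < 2 ^ K := Nat.pow_pos (by norm_num)
  have hmod0 : (0:ℤ) ≤ r % (2:ℤ) ^ K := Int.emod_nonneg r (by positivity)
  have hmodlt : r % (2:ℤ) ^ K < (2:ℤ) ^ K := Int.emod_lt_of_pos r (by positivity)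
  set R : ℕ := (r % (2:ℤ) ^ K).toNat with hRdef
  have hRlt : R < 2 ^ K := by
    have hc : ((2 ^ K : ℕ) : ℤ) = (2:ℤ) ^ K := by push_cast; ring
    omega
  have hcond : ∀ i : ℕ, ((2:ℤ) ^ K ∣ (i : ℤ) - r) ↔ i % 2 ^ K = R := by
    intro i
    have h2 : ((i % 2 ^ K : ℕ) : ℤ) = (i : ℤ) % (2:ℤ) ^ K := by push_cast; ring
    constructor
    · intro h
      have h3 : r % (2:ℤ) ^ K = (i : ℤ) % (2:ℤ) ^ K := Int.modEq_iff_dvd.mpr h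
      have : R = i % 2 ^ K := by rw [hRdef, h3, ← h2, Int.toNat_natCast]
      omega
    · intro h
      refine Int.modEq_iff_dvd.mp ?_
      show r % (2:ℤ) ^ K = (i : ℤ) % (2:ℤ) ^ K
      have h4 : ((R : ℕ) : ℤ) = r % (2:ℤ) ^ K := by
        rw [hRdef, Int.toNat_of_nonneg hmod0]
      rw [← h2, h]
      exact h4.symm
  have hpow : 2 ^ (m - K) * 2 ^ K = 2 ^ m := by rw [← pow_add]; congr 1; omega
  have hpow' : 2 ^ K * 2 ^ (m - K) = 2 ^ m := by rw [← pow_add]; congr 1; omega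
  have hfe : (Finset.range (2 ^ m)).filter (fun i : ℕ => (2:ℤ) ^ K ∣ (i : ℤ) - r)
      = (Finset.range (2 ^ (m - K))).image (fun t => 2 ^ K * t + R) := by
    ext i
    simp only [Finset.mem_filter, Finset.mem_range, Finset.mem_image, hcond i]
    constructor
    · rintro ⟨hlt, hmod⟩
      refine ⟨i / 2 ^ K, ?_, ?_⟩
      · rw [Nat.div_lt_iff_lt_mul hPpos, hpow]; exact hlt
      · rw [← hmod]; exact Nat.div_add_mod i (2 ^ K)
    · rintro ⟨t, hlt, rfl⟩
      refine ⟨?_, ?_⟩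
      · have h1 : 2 ^ K * (t + 1) ≤ 2 ^ K * 2 ^ (m - K) :=
          Nat.mul_le_mul_left _ (by omega)
        have h2 : 2 ^ K * (t + 1) = 2 ^ K * t + 2 ^ K := by ring
        omega
      · rw [Nat.mul_add_mod, Nat.mod_eq_of_lt hRlt]
  rw [hfe, Finset.card_image_of_injective _ ?_, Finset.card_range]
  intro a b hab
  simp only [Nat.add_right_cancel_iff] at hab
  exact Nat.eq_of_mul_eq_mul_left hPpos hab


/-- For `α ≥ 2` and an integer `n` with `2^j ∥ n`, the number of solutions `x` mod `2^{2α+1}`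
of `x² ≡ n² (mod 2^{2α+1})` equals `2^α` if `j ≥ α` and `2^{j+2}` if `j < α`. -/
theorem card_sqrt_sq_mod_two_pow_odd (n : ℤ) (j α : ℕ) (hα : 2 ≤ α)
    (h1 : (2 : ℤ) ^ j ∣ n) (h2 : ¬ (2 : ℤ) ^ (j + 1) ∣ n) :
    Nat.card {x : ZMod (2 ^ (2 * α + 1)) // x ^ 2 = (n : ZMod (2 ^ (2 * α + 1))) ^ 2} =
      if α ≤ j then 2 ^ α else 2 ^ (j + 2) := by
  classical
  obtain ⟨u', hn⟩ := h1
  have hu' : ¬ (2:ℤ) ∣ u' := by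
    rintro ⟨w, hw⟩
    exact h2 ⟨w, by rw [hn, hw, pow_succ]; ring⟩
  set N : ℕ := 2 ^ (2 * α + 1) with hN
  haveI : NeZero N := ⟨by positivity⟩
  have hNcast : ((N : ℕ) : ℤ) = (2:ℤ) ^ (2 * α + 1) := by rw [hN]; push_cast; ring
  have key : ∀ x : ZMod N,
      (x ^ 2 = (n : ZMod N) ^ 2) ↔ (2:ℤ) ^ (2*α+1) ∣ ((x.val : ℤ) ^ 2 - n ^ 2) := by
    intro x
    have e1 : (((x.val : ℤ) ^ 2 - n ^ 2 : ℤ) : ZMod N) = x ^ 2 - (n : ZMod N) ^ 2 := by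
      push_cast
      rw [ZMod.natCast_val, ZMod.cast_id]
    rw [← hNcast, ← ZMod.intCast_zmod_eq_zero_iff_dvd, e1, sub_eq_zero]
  have hcard : Nat.card {x : ZMod N // x ^ 2 = (n : ZMod N) ^ 2}
      = ((Finset.range N).filter
          (fun i : ℕ => (2:ℤ) ^ (2*α+1) ∣ (i:ℤ) ^ 2 - n ^ 2)).card := by
    rw [Nat.card_eq_fintype_card, Fintype.card_subtype]
    apply Finset.card_bij (fun x _ => x.val)
    · intro a ha
      refine Finset.mem_filter.mpr ⟨Finset.mem_range.mpr (ZMod.val_lt a), ?_⟩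
      exact (key a).mp (Finset.mem_filter.mp ha).2
    · intro a _ b _ hab
      have : ((a.val : ℕ) : ZMod N) = ((b.val : ℕ) : ZMod N) := by rw [hab]
      rwa [ZMod.natCast_val, ZMod.cast_id, ZMod.natCast_val, ZMod.cast_id] at this
    · intro b hb
      obtain ⟨hb1, hb2⟩ := Finset.mem_filter.mp hb
      have hvlt := Finset.mem_range.mp hb1
      refine ⟨(b : ZMod N), Finset.mem_filter.mpr ⟨Finset.mem_univ _, ?_⟩, ?_⟩
      · rw [key, ZMod.val_natCast_of_lt hvlt]; exact hb2
      · exact ZMod.val_natCast_of_lt hvlt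
  rcases le_or_gt α j with hj | hj
  · rw [if_pos hj, hcard]
    have hfe : (Finset.range N).filter
          (fun i : ℕ => (2:ℤ) ^ (2*α+1) ∣ (i:ℤ) ^ 2 - n ^ 2)
        = (Finset.range N).filter (fun i : ℕ => (2:ℤ) ^ (α+1) ∣ (i:ℤ) - n) :=
      Finset.filter_congr (fun i _ => aux_case1 n i j α hj u' hu' hn)
    rw [hfe, hN, aux_count (2*α+1) (α+1) (by omega) n,
      show 2*α+1-(α+1) = α by omega]
  · rw [if_neg (not_le.mpr hj), hcard]
    have hfe : (Finset.range N).filter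
          (fun i : ℕ => (2:ℤ) ^ (2*α+1) ∣ (i:ℤ) ^ 2 - n ^ 2)
        = (Finset.range N).filter (fun i : ℕ => (2:ℤ) ^ (2*α-j) ∣ (i:ℤ) - n)
          ∪ (Finset.range N).filter (fun i : ℕ => (2:ℤ) ^ (2*α-j) ∣ (i:ℤ) - (-n)) := by
      rw [← Finset.filter_or]
      exact Finset.filter_congr (fun i _ => by
        rw [aux_case2 n i j α hj u' hu' hn, sub_neg_eq_add])
    have hdisj : Disjoint
        ((Finset.range N).filter (fun i : ℕ => (2:ℤ) ^ (2*α-j) ∣ (i:ℤ) - n))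
        ((Finset.range N).filter (fun i : ℕ => (2:ℤ) ^ (2*α-j) ∣ (i:ℤ) - (-n))) := by
      rw [Finset.disjoint_left]
      intro i hi1 hi2
      have ha := (Finset.mem_filter.mp hi1).2
      have hb := (Finset.mem_filter.mp hi2).2
      have hsub : (2:ℤ) ^ (2*α-j) ∣ 2 ^ (j+1) * u' := by
        have hd := dvd_sub hb ha
        have : ((i:ℤ) - (-n)) - ((i:ℤ) - n) = 2 ^ (j+1) * u' := by
          rw [hn, pow_succ]; ring
        rwa [this] at hd
      exact absurd (dvd_trans (pow_dvd_pow 2 (by omega : j+2 ≤ 2*α-j)) hsub)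
        (fun h => aux_cancel_two (j+1) (j+2) u' hu' (by omega) h)
    rw [hfe, Finset.card_union_of_disjoint hdisj, hN,
      aux_count (2*α+1) (2*α-j) (by omega) n,
      aux_count (2*α+1) (2*α-j) (by omega) (-n),
      show 2*α+1-(2*α-j) = j+1 by omega]
    rw [show j+2 = (j+1)+1 by omega, pow_succ]
    ring
end

section
/- Let p > 2 be prime. A binary cubic form f = b v²w + c vw² + d w³ with b, c, d ∈ ℤ is non-maximal at p if and only if either p | b, or f is congruent mod p² to β w (v + δ w)² for some unit β ∈ (ℤ/p²ℤ)^× and some δ ∈ ℤ/p²ℤ (up to the action making the two conditions a disjoint classification). -/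
/-- The value of the binary cubic form `a v³ + b v²w + c vw² + d w³`. -/
def cubicVal (a b c d v w : ℤ) : ℤ :=
  a * v ^ 3 + b * v ^ 2 * w + c * v * w ^ 2 + d * w ^ 3

/-- Two integral binary cubic forms are `GL₂(ℤ)`-equivalent if one is obtained from the
other by the linear substitution `(v, w) ↦ ((v, w) g)` for some `g ∈ GL₂(ℤ)`. -/
def CubicEquiv (a b c d a' b' c' d' : ℤ) : Prop :=
  ∃ g : Matrix (Fin 2) (Fin 2) ℤ, IsUnit g.det ∧
    ∀ v w : ℤ, cubicVal a' b' c' d' v w =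
      cubicVal a b c d (g 0 0 * v + g 1 0 * w) (g 0 1 * v + g 1 1 * w)

/-- The cubic ring attached to the binary cubic form with coefficients `(a, b, c, d)` is
non-maximal at the prime `p` iff all coefficients are divisible by `p`, or the form is
`GL₂(ℤ)`-equivalent to a form with `p² | a'` and `p | b'`. -/
def NonMaximalAt (p : ℕ) (a b c d : ℤ) : Prop :=
  ((p : ℤ) ∣ a ∧ (p : ℤ) ∣ b ∧ (p : ℤ) ∣ c ∧ (p : ℤ) ∣ d) ∨
    ∃ a' b' c' d' : ℤ, CubicEquiv a b c d a' b' c' d' ∧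
      (p : ℤ) ^ 2 ∣ a' ∧ (p : ℤ) ∣ b'

/-- For `p > 2` prime, the form `b v²w + c vw² + d w³` is non-maximal at `p` iff either
`p | b`, or the form is congruent mod `p²` to `β w (v + δ w)²` for a unit `β` mod `p²`
and some `δ`. -/
theorem nonMaximalAt_reducible_classification (p : ℕ) (hp : p.Prime) (hodd : p ≠ 2)
    (b c d : ℤ) :
    NonMaximalAt p 0 b c d ↔
      ((p : ℤ) ∣ b ∨
        ∃ β δ : ℤ, ¬ (p : ℤ) ∣ β ∧ (p : ℤ) ^ 2 ∣ (b - β) ∧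
          (p : ℤ) ^ 2 ∣ (c - 2 * β * δ) ∧ (p : ℤ) ^ 2 ∣ (d - β * δ ^ 2)) := by
  have hp' : Prime ((p : ℤ)) := Nat.prime_iff_prime_int.1 hp
  have hp2 : ¬ (p : ℤ) ∣ 2 := by
    intro h
    have : p ∣ 2 := by exact_mod_cast h
    exact hodd ((Nat.prime_dvd_prime_iff_eq hp Nat.prime_two).mp this)
  unfold NonMaximalAt CubicEquiv
  constructor
  · rintro (⟨-, hb, -, -⟩ | ⟨a', b', c', d', ⟨g, hdet, hg⟩, hpa, hpb⟩)
    · exact Or.inl hb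
    by_cases hb : (p : ℤ) ∣ b
    · exact Or.inl hb
    right
    have h10 := hg 1 0
    have h01 := hg 0 1
    have h11 := hg 1 1
    have h21 := hg 2 1
    simp only [cubicVal] at h10 h01 h11 h21
    have ha : a' = cubicVal 0 b c d (g 0 0) (g 0 1) := by
      simp only [cubicVal]; linear_combination h10
    have hd : d' = cubicVal 0 b c d (g 1 0) (g 1 1) := by
      simp only [cubicVal]; linear_combination h01
    have hB : 2 * b' = cubicVal 0 b c d (2 * g 0 0 + g 1 0) (2 * g 0 1 + g 1 1)
        - 2 * cubicVal 0 b c d (g 0 0 + g 1 0) (g 0 1 + g 1 1)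
        - 6 * cubicVal 0 b c d (g 0 0) (g 0 1) + cubicVal 0 b c d (g 1 0) (g 1 1) := by
      simp only [cubicVal]; linear_combination h21 - 2 * h11 - 6 * h10 + h01
    have hC : 2 * c' = 4 * cubicVal 0 b c d (g 0 0 + g 1 0) (g 0 1 + g 1 1)
        - cubicVal 0 b c d (2 * g 0 0 + g 1 0) (2 * g 0 1 + g 1 1)
        + 4 * cubicVal 0 b c d (g 0 0) (g 0 1) - 3 * cubicVal 0 b c d (g 1 0) (g 1 1) := by
      simp only [cubicVal]; linear_combination 4 * h11 - h21 + 4 * h10 - 3 * h01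
    have key : 16 * (g 0 0 * g 1 1 - g 0 1 * g 1 0) ^ 6 * (b ^ 2 * (c ^ 2 - 4 * b * d))
        = a' * (72 * (2 * b') * (2 * c') * d' - 8 * (2 * c') ^ 3 - 432 * a' * d' ^ 2)
          + (2 * b') ^ 2 * ((2 * c') ^ 2 - 8 * (2 * b') * d') := by
      rw [hB, hC, ha, hd]
      simp only [cubicVal]
      ring
    have h6 : (g 0 0 * g 1 1 - g 0 1 * g 1 0) ^ 6 = 1 := by
      rcases Int.isUnit_iff.mp hdet with h | h <;>
        rw [Matrix.det_fin_two] at h <;> rw [h] <;> norm_num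
    have key2 : 16 * b ^ 2 * (c ^ 2 - 4 * b * d)
        = a' * (72 * (2 * b') * (2 * c') * d' - 8 * (2 * c') ^ 3 - 432 * a' * d' ^ 2)
          + (2 * b') ^ 2 * ((2 * c') ^ 2 - 8 * (2 * b') * d') := by
      linear_combination key - 16 * (b ^ 2 * (c ^ 2 - 4 * b * d)) * h6
    have hdvd : (p : ℤ) ^ 2 ∣ 16 * b ^ 2 * (c ^ 2 - 4 * b * d) := by
      rw [key2]
      exact dvd_add (hpa.mul_right _)
        ((pow_dvd_pow_of_dvd (hpb.mul_left 2) 2).mul_right _)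
    have hnd : ¬ (p : ℤ) ∣ 16 * b ^ 2 := by
      intro hdiv
      rcases hp'.dvd_mul.mp hdiv with h | h
      · exact hp2 (hp'.dvd_of_dvd_pow (show (p:ℤ) ∣ 2 ^ 4 by norm_num at h ⊢; exact h))
      · exact hb (hp'.dvd_of_dvd_pow h)
    have hcop : IsCoprime ((p : ℤ) ^ 2) (16 * b ^ 2) :=
      (hp'.coprime_iff_not_dvd.mpr hnd).pow_left
    have hkey3 : (p : ℤ) ^ 2 ∣ c ^ 2 - 4 * b * d := hcop.dvd_of_dvd_mul_left hdvd
    have hc2b : IsCoprime ((p : ℤ) ^ 2) (2 * b) := by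
      refine (hp'.coprime_iff_not_dvd.mpr ?_).pow_left
      intro hdiv
      rcases hp'.dvd_mul.mp hdiv with h | h
      · exact hp2 h
      · exact hb h
    obtain ⟨m, n, hmn⟩ := hc2b.symm
    have hδ : (p : ℤ) ^ 2 ∣ c - 2 * b * (m * c) := ⟨n * c, by linear_combination (-c) * hmn⟩
    refine ⟨b, m * c, hb, by simp, hδ, ?_⟩
    have h4 : (p : ℤ) ^ 2 ∣ 4 * b * (d - b * (m * c) ^ 2) := by
      have heq : 4 * b * (d - b * (m * c) ^ 2)
          = -(c ^ 2 - 4 * b * d) + (c - 2 * b * (m * c)) * (c + 2 * b * (m * c)) := by ring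
      rw [heq]
      exact dvd_add (dvd_neg.mpr hkey3) (hδ.mul_right _)
    have hc4b : IsCoprime ((p : ℤ) ^ 2) (4 * b) := by
      refine (hp'.coprime_iff_not_dvd.mpr ?_).pow_left
      intro hdiv
      rcases hp'.dvd_mul.mp hdiv with h | h
      · exact hp2 (hp'.dvd_of_dvd_pow (show (p:ℤ) ∣ 2 ^ 2 by norm_num at h ⊢; exact h))
      · exact hb h
    exact hc4b.dvd_of_dvd_mul_left h4
  · rintro (hb | ⟨β, δ, hβ, h1, h2, h3⟩)
    · refine Or.inr ⟨0, b, c, d, ⟨!![1, 0; 0, 1], ?_, fun v w => ?_⟩, dvd_zero _, hb⟩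
      · rw [Matrix.det_fin_two_of]; norm_num
      · simp only [cubicVal, Matrix.of_apply, Matrix.cons_val', Matrix.cons_val_zero, Matrix.cons_val_one,
          Matrix.head_cons, Matrix.empty_val', Matrix.cons_val_fin_one, Matrix.head_fin_const]
        ring
    · refine Or.inr ⟨b * δ ^ 2 - c * δ + d, c - 2 * b * δ, b, 0,
        ⟨!![-δ, 1; 1, 0], ?_, fun v w => ?_⟩, ?_, ?_⟩
      · rw [Matrix.det_fin_two_of]
        exact Int.isUnit_iff.mpr (Or.inr (by ring))
      · simp only [cubicVal, Matrix.of_apply, Matrix.cons_val', Matrix.cons_val_zero, Matrix.cons_val_one,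
          Matrix.head_cons, Matrix.empty_val', Matrix.cons_val_fin_one, Matrix.head_fin_const]
        ring
      · have heq : b * δ ^ 2 - c * δ + d
            = δ ^ 2 * (b - β) - δ * (c - 2 * β * δ) + (d - β * δ ^ 2) := by ring
        rw [heq]
        exact dvd_add (dvd_sub (h1.mul_left _) (h2.mul_left _)) h3
      · have hX : (p : ℤ) ^ 2 ∣ c - 2 * b * δ := by
          have heq : c - 2 * b * δ = -2 * δ * (b - β) + (c - 2 * β * δ) := by ring
          rw [heq]
          exact dvd_add (h1.mul_left _) h2
        exact (dvd_pow_self ((p : ℤ)) two_ne_zero).trans hX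
end

section
/- Every nondegenerate binary cubic form over ℤ that is reducible over ℤ is GL₂(ℤ)-equivalent (under the SL₂(ℤ)-action) to a form of the shape b v²w + c vw² + d w³ with b > 0 and 0 ≤ c < 2b. -/
lemma disc_inv (a b c d p x q y A B C D : ℤ)
    (hA : A = a*p^3 + b*p^2*q + c*p*q^2 + d*q^3)
    (hB : B = 3*a*p^2*x + b*(2*p*x*q + p^2*y) + c*(x*q^2 + 2*p*q*y) + 3*d*q^2*y)
    (hC : C = 3*a*p*x^2 + b*(x^2*q + 2*p*x*y) + c*(2*x*q*y + p*y^2) + 3*d*q*y^2)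
    (hD : D = a*x^3 + b*x^2*y + c*x*y^2 + d*y^3) :
    B^2*C^2 + 18*A*B*C*D - 4*A*C^3 - 4*B^3*D - 27*A^2*D^2
      = (p*y - x*q)^6 * (b^2*c^2 + 18*a*b*c*d - 4*a*c^3 - 4*b^3*d - 27*a^2*d^2) := by
  subst hA hB hC hD; ring

lemma cubic_helper (a b c d p xx q0 yy A B C D : ℤ)
    (hdet : p * yy - xx * q0 = 1)
    (hA0 : A = 0) (hBpos : 0 < B)
    (hkey : ∀ V W : ℤ,
      a * (p*V + xx*W)^3 + b * (p*V + xx*W)^2 * (q0*V + yy*W)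
        + c * (p*V + xx*W) * (q0*V + yy*W)^2 + d * (q0*V + yy*W)^3
        = A*V^3 + B*V^2*W + C*V*W^2 + D*W^3) :
    ∃ (g : Matrix (Fin 2) (Fin 2) ℤ) (b' c' d' : ℤ),
      g.det = 1 ∧ 0 < b' ∧ 0 ≤ c' ∧ c' < 2 * b' ∧
      ∀ v w : ℤ,
        b' * v ^ 2 * w + c' * v * w ^ 2 + d' * w ^ 3 =
          a * (g 0 0 * v + g 1 0 * w) ^ 3
            + b * (g 0 0 * v + g 1 0 * w) ^ 2 * (g 0 1 * v + g 1 1 * w)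
            + c * (g 0 0 * v + g 1 0 * w) * (g 0 1 * v + g 1 1 * w) ^ 2
            + d * (g 0 1 * v + g 1 1 * w) ^ 3 := by
  obtain ⟨t, ht⟩ : ∃ t, t = -(C / (2*B)) := ⟨_, rfl⟩
  have hc'eq : C % (2*B) = C + 2*B*t := by rw [ht, Int.emod_def]; ring
  refine ⟨!![p, q0; p*t + xx, q0*t + yy], B, C % (2*B), B*t^2 + C*t + D, ?_, hBpos, ?_, ?_, ?_⟩
  · rw [Matrix.det_fin_two_of]; linear_combination hdet
  · exact Int.emod_nonneg _ (by positivity)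
  · exact Int.emod_lt_of_pos _ (by positivity)
  · intro v w
    have h1 := hkey (v + t*w) w
    simp only [Matrix.cons_val', Matrix.cons_val_zero, Matrix.cons_val_one, Matrix.head_cons,
      Matrix.empty_val', Matrix.cons_val_fin_one, Matrix.head_fin_const, Matrix.of_apply]
    linear_combination -h1 - (v + t*w)^3 * hA0 + v*w^2 * hc'eq

/-- Every nondegenerate integral binary cubic form that is reducible over `ℤ` is
equivalent under the `SL₂(ℤ)`-substitution action to a form `b v²w + c vw² + d w³`
with `b > 0` and `0 ≤ c < 2b`. -/
theorem reducible_cubic_normal_form (a b c d : ℤ)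
    (hdisc : b ^ 2 * c ^ 2 + 18 * a * b * c * d - 4 * a * c ^ 3 - 4 * b ^ 3 * d
      - 27 * a ^ 2 * d ^ 2 ≠ 0)
    (hred : ∃ e f q r s : ℤ, ∀ v w : ℤ,
      a * v ^ 3 + b * v ^ 2 * w + c * v * w ^ 2 + d * w ^ 3 =
        (e * v + f * w) * (q * v ^ 2 + r * v * w + s * w ^ 2)) :
    ∃ (g : Matrix (Fin 2) (Fin 2) ℤ) (b' c' d' : ℤ),
      g.det = 1 ∧ 0 < b' ∧ 0 ≤ c' ∧ c' < 2 * b' ∧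
      ∀ v w : ℤ,
        b' * v ^ 2 * w + c' * v * w ^ 2 + d' * w ^ 3 =
          a * (g 0 0 * v + g 1 0 * w) ^ 3
            + b * (g 0 0 * v + g 1 0 * w) ^ 2 * (g 0 1 * v + g 1 1 * w)
            + c * (g 0 0 * v + g 1 0 * w) * (g 0 1 * v + g 1 1 * w) ^ 2
            + d * (g 0 1 * v + g 1 1 * w) ^ 3 := by
  obtain ⟨e, f, q, r, s, hfac⟩ := hred
  by_cases hef : e = 0 ∧ f = 0
  · exfalso
    obtain ⟨he, hf⟩ := hef
    subst he hf
    have h1 := hfac 1 0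
    have h2 := hfac 0 1
    have h3 := hfac 1 1
    have h4 := hfac 1 (-1)
    have ha : a = 0 := by linear_combination h1
    have hd : d = 0 := by linear_combination h2
    ring_nf at h3 h4
    have hb : b = 0 := by linarith
    have hc : c = 0 := by linarith
    apply hdisc
    rw [ha, hb, hc, hd]; ring
  · have hgpos : 0 < Int.gcd e f := Int.gcd_pos_iff.mpr (by tauto)
    set g0 : ℤ := (Int.gcd e f : ℤ) with hg0
    have he' : e = g0 * (e / g0) := (Int.mul_ediv_cancel' (Int.gcd_dvd_left e f)).symm
    have hf' : f = g0 * (f / g0) := (Int.mul_ediv_cancel' (Int.gcd_dvd_right e f)).symm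
    have hcop : Int.gcd (e / g0) (f / g0) = 1 := Int.gcd_div_gcd_div_gcd hgpos
    obtain ⟨u, v0, huv⟩ : IsCoprime (e / g0) (f / g0) :=
      Int.isCoprime_iff_gcd_eq_one.mpr hcop
    set e₁ := e / g0
    set f₁ := f / g0
    -- the first substitution matrix columns
    set p := f₁ with hp
    set q0 := -e₁ with hq0
    set xx := u with hxx
    set yy := v0 with hyy
    have hdet : p * yy - xx * q0 = 1 := by
      rw [hp, hq0, hxx, hyy]; linear_combination huv
    obtain ⟨A, hAdef⟩ : ∃ A, A = a*p^3 + b*p^2*q0 + c*p*q0^2 + d*q0^3 := ⟨_, rfl⟩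
    obtain ⟨B, hBdef⟩ : ∃ B, B = 3*a*p^2*xx + b*(2*p*xx*q0 + p^2*yy)
        + c*(xx*q0^2 + 2*p*q0*yy) + 3*d*q0^2*yy := ⟨_, rfl⟩
    obtain ⟨C, hCdef⟩ : ∃ C, C = 3*a*p*xx^2 + b*(xx^2*q0 + 2*p*xx*yy)
        + c*(2*xx*q0*yy + p*yy^2) + 3*d*q0*yy^2 := ⟨_, rfl⟩
    obtain ⟨D, hDdef⟩ : ∃ D, D = a*xx^3 + b*xx^2*yy + c*xx*yy^2 + d*yy^3 := ⟨_, rfl⟩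
    have hkey : ∀ V W : ℤ,
        a * (p*V + xx*W)^3 + b * (p*V + xx*W)^2 * (q0*V + yy*W)
          + c * (p*V + xx*W) * (q0*V + yy*W)^2 + d * (q0*V + yy*W)^3
          = A*V^3 + B*V^2*W + C*V*W^2 + D*W^3 := by
      intro V W; rw [hAdef, hBdef, hCdef, hDdef]; ring
    have hef0 : e * p + f * q0 = 0 := by
      rw [hp, hq0, he', hf']; ring
    have hA0 : A = 0 := by
      have h := hfac p q0
      rw [hAdef]
      linear_combination h + (q*p^2 + r*p*q0 + s*q0^2) * hef0
    have hinv := disc_inv a b c d p xx q0 yy A B C D hAdef hBdef hCdef hDdef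
    rw [hdet, one_pow, one_mul] at hinv
    have hBne : B ≠ 0 := by
      intro h0
      apply hdisc
      rw [hA0, h0] at hinv
      linear_combination -hinv
    rcases hBne.lt_or_gt with hneg | hpos
    · -- B < 0 : negate the matrix
      have hdet' : (-p) * (-yy) - (-xx) * (-q0) = 1 := by linear_combination hdet
      have hA0' : (-A) = 0 := by rw [hA0]; ring
      have hBpos' : 0 < -B := by linarith
      have hkey' : ∀ V W : ℤ,
          a * ((-p)*V + (-xx)*W)^3 + b * ((-p)*V + (-xx)*W)^2 * ((-q0)*V + (-yy)*W)
            + c * ((-p)*V + (-xx)*W) * ((-q0)*V + (-yy)*W)^2 + d * ((-q0)*V + (-yy)*W)^3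
            = (-A)*V^3 + (-B)*V^2*W + (-C)*V*W^2 + (-D)*W^3 := by
        intro V W; linear_combination hkey (-V) (-W)
      exact cubic_helper a b c d (-p) (-xx) (-q0) (-yy) (-A) (-B) (-C) (-D)
        hdet' hA0' hBpos' hkey'
    · exact cubic_helper a b c d p xx q0 yy A B C D hdet hA0 hpos hkey
end

section
/- The singular dual integral binary quadratic forms (those (a, 2m, c) ∈ ℤ × 2ℤ × ℤ with a(b²−4ac)-invariants vanishing, i.e., with a·Disc = 0 in the sense that either the discriminant or the first coefficient vanishes) decompose as the disjoint union: {(0,0,0)} ⊔ {(0,0,ℓ) : ℓ ∈ ℤ∖{0}} ⊔ B_ℤ⁺ · {(0, 2m, n) : m ≠ 0, 0 ≤ n < |2m|} ⊔ B_ℤ⁺ · {ℓ(b², 2bd, d²) : gcd(b,d)=1, ℓ ≠ 0, 0 ≤ d < b}, where B_ℤ⁺ is the group of integral lower triangular unipotent matrices acting on quadratic forms, and the union is disjoint with each orbit appearing exactly once. -/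
/-- The action of the integral lower triangular unipotent matrix `[[1,0],[u,1]]` on a
binary quadratic form `(a, b, c) ↔ a v² + b vw + c w²` via `Q ↦ g Q gᵀ`:
`(a, b, c) ↦ (a, b + 2au, c + bu + au²)`. -/
def unipAct (u : ℤ) (x : ℤ × ℤ × ℤ) : ℤ × ℤ × ℤ :=
  (x.1, x.2.1 + 2 * x.1 * u, x.2.2 + x.2.1 * u + x.1 * u ^ 2)

/-- Parameters for the decomposition of the singular dual integral binary quadratic
forms: the zero form; `(0,0,ℓ)`; `γ_u · (0, 2m, n)`; and `γ_u · ℓ(b², 2bd, d²)`. -/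
def singVal : Unit ⊕ ℤ ⊕ (ℤ × ℤ × ℤ) ⊕ (ℤ × ℤ × ℤ × ℤ) → ℤ × ℤ × ℤ
  | Sum.inl _ => (0, 0, 0)
  | Sum.inr (Sum.inl ℓ) => (0, 0, ℓ)
  | Sum.inr (Sum.inr (Sum.inl (m, n, u))) => unipAct u (0, 2 * m, n)
  | Sum.inr (Sum.inr (Sum.inr (ℓ, b, d, u))) =>
      unipAct u (ℓ * b ^ 2, 2 * ℓ * b * d, ℓ * d ^ 2)

/-- Side conditions on the parameters: `ℓ ≠ 0`; `m ≠ 0` and `0 ≤ n < |2m|`;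
`ℓ ≠ 0`, `gcd(b,d) = 1` and `0 ≤ d < b`. -/
def singValid : Unit ⊕ ℤ ⊕ (ℤ × ℤ × ℤ) ⊕ (ℤ × ℤ × ℤ × ℤ) → Prop
  | Sum.inl _ => True
  | Sum.inr (Sum.inl ℓ) => ℓ ≠ 0
  | Sum.inr (Sum.inr (Sum.inl (m, n, u))) => m ≠ 0 ∧ 0 ≤ n ∧ n < |2 * m|
  | Sum.inr (Sum.inr (Sum.inr (ℓ, b, d, u))) => ℓ ≠ 0 ∧ Int.gcd b d = 1 ∧ 0 ≤ d ∧ d < b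

/-- quotient–remainder uniqueness -/
lemma qr_unique {b n u n' u' : ℤ} (hb : b ≠ 0) (h0 : 0 ≤ n) (h1 : n < |b|)
    (h0' : 0 ≤ n') (h1' : n' < |b|) (h : n + b * u = n' + b * u') : n = n' ∧ u = u' := by
  have hd : |b| ∣ (n' - n) := (abs_dvd _ _).2 ⟨u - u', by ring_nf; linarith⟩
  have hz : n' - n = 0 := Int.eq_zero_of_abs_lt_dvd hd (abs_lt.2 ⟨by linarith, by linarith⟩)
  have hn : n = n' := by linarith
  refine ⟨hn, ?_⟩
  have : b * u = b * u' := by linarith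
  exact mul_left_cancel₀ hb this

lemma qr_exists (b c : ℤ) (hb : b ≠ 0) :
    ∃ n u : ℤ, 0 ≤ n ∧ n < |b| ∧ n + b * u = c := by
  refine ⟨c % b, c / b, Int.emod_nonneg c hb, (by simpa using Int.emod_lt c hb), ?_⟩
  have := Int.mul_ediv_add_emod c b
  linarith

lemma case4_inj {ℓ b D ℓ' b' D' : ℤ} (hℓ : ℓ ≠ 0) (hb : 0 < b) (hg : Int.gcd b D = 1)
    (hℓ' : ℓ' ≠ 0) (hb' : 0 < b') (hg' : Int.gcd b' D' = 1)
    (h1 : ℓ * b ^ 2 = ℓ' * b' ^ 2) (h2 : ℓ * b * D = ℓ' * b' * D') :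
    ℓ = ℓ' ∧ b = b' ∧ D = D' := by
  have key : Int.gcd (ℓ * b * b) (ℓ * b * D) = (ℓ * b).natAbs * Int.gcd b D :=
    Int.gcd_mul_left _ _ _
  have key' : Int.gcd (ℓ' * b' * b') (ℓ' * b' * D') = (ℓ' * b').natAbs * Int.gcd b' D' :=
    Int.gcd_mul_left _ _ _
  have e1 : ℓ * b * b = ℓ' * b' * b' := by linear_combination h1
  have hne : (ℓ * b).natAbs = (ℓ' * b').natAbs := by
    rw [e1, h2] at key; rw [key', hg'] at key; rw [hg] at key; omega
  have habs : |ℓ * b| = |ℓ' * b'| := by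
    rw [Int.abs_eq_natAbs, Int.abs_eq_natAbs, hne]
  have hpp : |ℓ| * b = |ℓ'| * b' := by
    rw [abs_mul, abs_of_pos hb] at habs
    rw [abs_mul, abs_of_pos hb'] at habs
    exact habs
  have hq : |ℓ| * b ^ 2 = |ℓ'| * b' ^ 2 := by
    have := abs_eq_abs.2 (Or.inl h1)
    rwa [abs_mul, abs_mul, abs_pow, abs_pow, abs_of_pos hb, abs_of_pos hb'] at this
  have hbb : b = b' := by
    have hp0 : |ℓ| * b ≠ 0 := by positivity
    refine mul_left_cancel₀ hp0 ?_
    calc (|ℓ| * b) * b = |ℓ| * b ^ 2 := by ring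
      _ = |ℓ'| * b' ^ 2 := hq
      _ = (|ℓ'| * b') * b' := by ring
      _ = (|ℓ| * b) * b' := by rw [hpp]
  subst hbb
  have hℓℓ : ℓ = ℓ' := by
    have hb2 : (b : ℤ) ^ 2 ≠ 0 := by positivity
    refine mul_left_cancel₀ hb2 ?_
    linear_combination h1
  subst hℓℓ
  refine ⟨rfl, rfl, mul_left_cancel₀ (mul_ne_zero hℓ hb.ne') ?_⟩
  linear_combination h2

lemma case4_exists (a e c : ℤ) (ha : a ≠ 0) (h : e ^ 2 = a * c) :
    ∃ ℓ b D : ℤ, ℓ ≠ 0 ∧ 0 < b ∧ Int.gcd b D = 1 ∧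
      a = ℓ * b ^ 2 ∧ e = ℓ * b * D ∧ c = ℓ * D ^ 2 := by
  have hgpos : 0 < Int.gcd a e :=
    Nat.pos_of_ne_zero (fun hh => ha (Int.gcd_eq_zero_iff.1 hh).1)
  have hg0 : (0:ℤ) < (Int.gcd a e : ℤ) := by exact_mod_cast hgpos
  obtain ⟨a₁, ha₁⟩ : (Int.gcd a e : ℤ) ∣ a := Int.gcd_dvd_left a e
  obtain ⟨e₁, he₁⟩ : (Int.gcd a e : ℤ) ∣ e := Int.gcd_dvd_right a e
  have ha₁' : a₁ = a / (Int.gcd a e : ℤ) := by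
    have h2 := Int.mul_ediv_cancel_left (a := (Int.gcd a e : ℤ)) a₁ hg0.ne'
    rw [← ha₁] at h2; exact h2.symm
  have he₁' : e₁ = e / (Int.gcd a e : ℤ) := by
    have h2 := Int.mul_ediv_cancel_left (a := (Int.gcd a e : ℤ)) e₁ hg0.ne'
    rw [← he₁] at h2; exact h2.symm
  have ha₁0 : a₁ ≠ 0 := by rintro rfl; rw [mul_zero] at ha₁; exact ha ha₁
  have hcop : Int.gcd a₁ e₁ = 1 := by
    rw [ha₁', he₁']; exact Int.gcd_div_gcd_div_gcd hgpos
  have hkey : (Int.gcd a e : ℤ) * e₁ ^ 2 = a₁ * c := by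
    refine mul_left_cancel₀ hg0.ne' ?_
    calc (Int.gcd a e : ℤ) * ((Int.gcd a e : ℤ) * e₁ ^ 2)
        = ((Int.gcd a e : ℤ) * e₁) ^ 2 := by ring
      _ = e ^ 2 := by rw [← he₁]
      _ = a * c := h
      _ = (Int.gcd a e : ℤ) * (a₁ * c) := by
          conv_lhs => rw [ha₁]
          ring

  have hdvd : a₁ ∣ (Int.gcd a e : ℤ) := by
    have hic : IsCoprime a₁ e₁ := Int.isCoprime_iff_gcd_eq_one.2 hcop
    exact (hic.pow_right).dvd_of_dvd_mul_right ⟨c, hkey⟩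
  obtain ⟨ℓ, hℓ⟩ := hdvd
  have hℓ0 : ℓ ≠ 0 := by
    rintro rfl
    rw [mul_zero] at hℓ
    exact absurd hℓ hg0.ne' 
  have hceq : c = ℓ * e₁ ^ 2 := by
    refine mul_left_cancel₀ ha₁0 ?_
    rw [← hkey, hℓ]; ring
  rcases lt_or_gt_of_ne ha₁0 with hneg | hpos
  · refine ⟨ℓ, -a₁, -e₁, hℓ0, by omega, ?_, ?_, ?_, ?_⟩
    · rw [Int.neg_gcd, Int.gcd_neg]; exact hcop
    · conv_lhs => rw [ha₁]
      rw [hℓ]; ring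
    · conv_lhs => rw [he₁]
      rw [hℓ]; ring
    · first
      | exact hceq
      | (rw [hceq]; ring)
  · refine ⟨ℓ, a₁, e₁, hℓ0, hpos, hcop, ?_, ?_, ?_⟩
    · conv_lhs => rw [ha₁]
      rw [hℓ]; ring
    · conv_lhs => rw [he₁]
      rw [hℓ]; ring
    · first
      | exact hceq
      | (rw [hceq]; ring)

lemma singVal_case1 (t : Unit) : singVal (Sum.inl t) = (0, 0, 0) := rfl

lemma singVal_case2 (ℓ : ℤ) : singVal (Sum.inr (Sum.inl ℓ)) = (0, 0, ℓ) := rfl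

lemma singVal_case3 (m n u : ℤ) :
    singVal (Sum.inr (Sum.inr (Sum.inl (m, n, u)))) = (0, 2 * m, n + 2 * m * u) := by
  simp only [singVal, unipAct, Prod.mk.injEq]
  exact ⟨by trivial, by ring, by ring⟩

lemma singVal_case4 (ℓ b d u : ℤ) :
    singVal (Sum.inr (Sum.inr (Sum.inr (ℓ, b, d, u)))) =
      (ℓ * b ^ 2, 2 * (ℓ * b * (d + b * u)), ℓ * (d + b * u) ^ 2) := by
  simp only [singVal, unipAct, Prod.mk.injEq]
  exact ⟨by trivial, by ring, by ring⟩

lemma singVal_inj {P Q : Unit ⊕ ℤ ⊕ (ℤ × ℤ × ℤ) ⊕ (ℤ × ℤ × ℤ × ℤ)}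
    (hP : singValid P) (hQ : singValid Q) (h : singVal P = singVal Q) : P = Q := by
  rcases P with _ | ℓP | ⟨Pm, Pn, Pu⟩ | ⟨Pℓ, Pb, Pd, Pu⟩ <;>
    rcases Q with _ | ℓQ | ⟨Qm, Qn, Qu⟩ | ⟨Qℓ, Qb, Qd, Qu⟩ <;>
    simp only [singValid] at hP hQ <;>
    simp only [singVal_case1, singVal_case2, singVal_case3, singVal_case4, Prod.mk.injEq] at h <;>
    obtain ⟨hA, hB, hC⟩ := h
  · rfl
  · exact absurd hC.symm hQ
  · exact absurd (by omega : Qm = 0) hQ.1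
  · exact absurd hA.symm (mul_ne_zero hQ.1 (pow_ne_zero 2 (by omega : Qb ≠ 0)))
  · exact absurd hC hP
  · rw [hC]
  · exact absurd (by omega : Qm = 0) hQ.1
  · exact absurd hA.symm (mul_ne_zero hQ.1 (pow_ne_zero 2 (by omega : Qb ≠ 0)))
  · exact absurd (by omega : Pm = 0) hP.1
  · exact absurd (by omega : Pm = 0) hP.1
  · -- case 3 vs case 3
    obtain ⟨hm, hn0, hn1⟩ := hP
    obtain ⟨hm', hn0', hn1'⟩ := hQ
    have hmm : Pm = Qm := by omega
    subst hmm
    have := qr_unique (b := 2 * Pm) (by omega) hn0 hn1 hn0' hn1' hC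
    rw [this.1, this.2]
  · exact absurd hA.symm (mul_ne_zero hQ.1 (pow_ne_zero 2 (by omega : Qb ≠ 0)))
  · exact absurd hA (mul_ne_zero hP.1 (pow_ne_zero 2 (by omega : Pb ≠ 0)))
  · exact absurd hA (mul_ne_zero hP.1 (pow_ne_zero 2 (by omega : Pb ≠ 0)))
  · exact absurd hA (mul_ne_zero hP.1 (pow_ne_zero 2 (by omega : Pb ≠ 0)))
  · -- case 4 vs case 4
    obtain ⟨hℓ, hg, hd0, hdb⟩ := hP
    obtain ⟨hℓ', hg', hd0', hdb'⟩ := hQ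
    have hb : (0:ℤ) < Pb := by omega
    have hb' : (0:ℤ) < Qb := by omega
    have hgD : Int.gcd Pb (Pd + Pb * Pu) = 1 := by
      rw [← Int.isCoprime_iff_gcd_eq_one] at hg ⊢
      exact hg.add_mul_left_right Pu
    have hgD' : Int.gcd Qb (Qd + Qb * Qu) = 1 := by
      rw [← Int.isCoprime_iff_gcd_eq_one] at hg' ⊢
      exact hg'.add_mul_left_right Qu
    have e2' : Pℓ * Pb * (Pd + Pb * Pu) = Qℓ * Qb * (Qd + Qb * Qu) :=
      mul_left_cancel₀ two_ne_zero hB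
    obtain ⟨eℓ, eb, eD⟩ := case4_inj hℓ hb hgD hℓ' hb' hgD' hA e2'
    subst eℓ; subst eb
    have := qr_unique hb.ne' hd0 (by rwa [abs_of_pos hb]) hd0' (by rwa [abs_of_pos hb]) eD
    rw [this.1, this.2]

/-- A dual integral binary quadratic form `(x₁, x₂, x₃)` (so `x₂` is even) is singular
(discriminant zero or first coefficient zero) if and only if it is represented exactly
once in the disjoint union
`{(0,0,0)} ⊔ {(0,0,ℓ) : ℓ ≠ 0} ⊔ B_ℤ⁺·{(0,2m,n) : m ≠ 0, 0 ≤ n < |2m|} ⊔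
 B_ℤ⁺·{ℓ(b²,2bd,d²) : gcd(b,d) = 1, ℓ ≠ 0, 0 ≤ d < b}`. -/
theorem singular_dual_forms_decomposition (x : ℤ × ℤ × ℤ) (hx : 2 ∣ x.2.1) :
    (x.2.1 ^ 2 - 4 * x.1 * x.2.2 = 0 ∨ x.1 = 0) ↔
      ∃! P : Unit ⊕ ℤ ⊕ (ℤ × ℤ × ℤ) ⊕ (ℤ × ℤ × ℤ × ℤ),
        singValid P ∧ singVal P = x := by
  obtain ⟨a, e2, c⟩ := x
  simp only at hx ⊢
  obtain ⟨e, rfl⟩ : ∃ e, e2 = 2 * e := ⟨e2 / 2, by omega⟩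
  constructor
  · intro hsing
    suffices hex : ∃ P, singValid P ∧ singVal P = (a, 2 * e, c) by
      obtain ⟨P, hP⟩ := hex
      exact ⟨P, hP, fun Q hQ => singVal_inj hQ.1 hP.1 (hQ.2.trans hP.2.symm)⟩
    by_cases ha : a = 0
    · subst ha
      by_cases he : e = 0
      · subst he
        by_cases hc : c = 0
        · exact ⟨Sum.inl (), trivial, by simp [singVal, hc]⟩
        · exact ⟨Sum.inr (Sum.inl c), hc, by simp [singVal]⟩
      · obtain ⟨n, u, hn0, hn1, hnu⟩ := qr_exists (2 * e) c (by omega)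
        refine ⟨Sum.inr (Sum.inr (Sum.inl (e, n, u))), ⟨he, hn0, hn1⟩, ?_⟩
        rw [singVal_case3, Prod.mk.injEq, Prod.mk.injEq]
        exact ⟨rfl, rfl, by linarith⟩
    · have hdisc : e ^ 2 = a * c := by
        rcases hsing with h | h
        · nlinarith [h]
        · exact absurd h ha
      obtain ⟨ℓ, b, D, hℓ, hb, hg, hA, hB, hC⟩ := case4_exists a e c ha hdisc
      obtain ⟨d, u, hd0, hd1, hdu⟩ := qr_exists b D hb.ne'
      rw [abs_of_pos hb] at hd1
      have hgd : Int.gcd b d = 1 := by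
        rw [← Int.isCoprime_iff_gcd_eq_one] at hg ⊢
        have h1 : IsCoprime b (d + b * u) := by rwa [hdu]
        have h2 := h1.add_mul_left_right (-u)
        simpa using h2
      refine ⟨Sum.inr (Sum.inr (Sum.inr (ℓ, b, d, u))), ⟨hℓ, hgd, hd0, hd1⟩, ?_⟩
      rw [singVal_case4, Prod.mk.injEq, Prod.mk.injEq, hdu]
      exact ⟨hA.symm, by rw [hB], by rw [hC]⟩
  · rintro ⟨P, ⟨hPv, hPx⟩, -⟩
    rcases P with _ | (ℓ | (⟨m, n, u⟩ | ⟨ℓ, b, d, u⟩))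
    · simp only [singVal, Prod.mk.injEq] at hPx; right; exact hPx.1.symm
    · simp only [singVal, Prod.mk.injEq] at hPx; right; exact hPx.1.symm
    · rw [singVal_case3, Prod.mk.injEq] at hPx; right; exact hPx.1.symm
    · rw [singVal_case4, Prod.mk.injEq, Prod.mk.injEq] at hPx
      obtain ⟨hA, hB, hC⟩ := hPx
      left
      have he : e = ℓ * b * (d + b * u) := by linarith
      rw [← hA, ← hC, he]; ring
end
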